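/- arXiv:2307.15396 — 2 statements merged into one kernel-verified Lean document; each statement's English description precedes it below -/
import Mathlib

section
/- Let 0 ≤ x₁ < ... < xₙ with labels y₁,...,yₙ, let f̂ be the minimum-norm interpolating two-layer ReLU network with skip connection, let δ_i be the slope of the affine function g_i through (x_i,y_i) and (x_{i+1},y_{i+1}), with the conventions δ₀ := δ₁ and δₙ := δ_{n−1}, and let s*_i := lim_{ε→0⁺} f̂'(x_i − ε) be the slope of the linear piece of f̂ incoming to x_i. Then for every i ∈ [n], s*_i ∈ [min(δ_{i−1}, δ_i), max(δ_{i−1}, δ_i)]. -/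
open scoped ENNReal NNReal

noncomputable section

/-- A two-layer ReLU network of width `m` with a (unregularized) skip connection. -/
def netFun (m : ℕ) (a w b : Fin m → ℝ) (a₀ b₀ : ℝ) : ℝ → ℝ :=
  fun t => (∑ j, a j * max (w j * t + b j) 0) + a₀ * t + b₀

/-- The squared norm `‖θ‖²` of the (regularized) weights. -/
def normSq (m : ℕ) (a w b : Fin m → ℝ) : ℝ :=
  ∑ j, ((a j) ^ 2 + (w j) ^ 2 + (b j) ^ 2)

/-- `f` interpolates the sample `S`. -/
def Interpolates {n : ℕ} (S : Fin n → ℝ × ℝ) (f : ℝ → ℝ) : Prop :=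
  ∀ i, f (S i).1 = (S i).2

/-- `f` is a minimum-norm interpolating two-layer ReLU network with skip connection. -/
def IsMinNormNet {n : ℕ} (S : Fin n → ℝ × ℝ) (f : ℝ → ℝ) : Prop :=
  ∃ (m : ℕ) (a w b : Fin m → ℝ) (a₀ b₀ : ℝ),
    f = netFun m a w b a₀ b₀ ∧ Interpolates S f ∧
    ∀ (m' : ℕ) (a' w' b' : Fin m' → ℝ) (a₀' b₀' : ℝ),
      Interpolates S (netFun m' a' w' b' a₀' b₀') →
      normSq m a w b ≤ normSq m' a' w' b'

/-- The pieceSlope `δ_i` of the affine function `g_i` through consecutive data points `i, i+1`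
(0-indexed). -/
def pieceSlope (x y : ℕ → ℝ) (i : ℕ) : ℝ := (y (i + 1) - y i) / (x (i + 1) - x i)

/-- Extended slopes, with the paper's conventions `δ₀ := δ₁` and `δ_n := δ_{n-1}`
(in 0-indexed terms: the pieceSlope at index `n-1` and above is `δ_{n-2}`; combined with
truncated subtraction, `slopeExt n x y (i-1)` at `i = 0` gives `δ₀ := δ₁`). -/
def slopeExt (n : ℕ) (x y : ℕ → ℝ) (i : ℕ) : ℝ :=
  if i + 1 < n then pieceSlope x y i else pieceSlope x y (n - 2)


open Finset

/-- weight function √(1+t²) -/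
def cc (t : ℝ) : ℝ := Real.sqrt (1 + t^2)

lemma cc_sq (t : ℝ) : cc t ^ 2 = 1 + t^2 :=
  Real.sq_sqrt (by positivity)

lemma cc_pos (t : ℝ) : 0 < cc t := Real.sqrt_pos.mpr (by positivity)

lemma one_le_cc (t : ℝ) : 1 ≤ cc t := by
  have := Real.sqrt_le_sqrt (show (1:ℝ) ≤ 1 + t^2 by nlinarith)
  simpa [cc, Real.sqrt_one] using this

lemma abs_lt_cc (t : ℝ) : |t| < cc t := by
  have h1 : |t|^2 < cc t ^ 2 := by rw [cc_sq, sq_abs]; nlinarith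
  have := abs_nonneg t
  nlinarith [cc_pos t]

lemma self_lt_cc (t : ℝ) : t < cc t := lt_of_le_of_lt (le_abs_self t) (abs_lt_cc t)

lemma cc_key (a b : ℝ) : 1 + a*b ≤ cc a * cc b := by
  rcases le_or_gt (1 + a*b) 0 with h | h
  · exact h.trans (mul_pos (cc_pos a) (cc_pos b)).le
  · have h2 : (1 + a*b)^2 ≤ (cc a * cc b)^2 := by
      rw [mul_pow, cc_sq, cc_sq]; nlinarith [sq_nonneg (a - b)]
    nlinarith [cc_pos a, cc_pos b, mul_pos (cc_pos a) (cc_pos b)]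

lemma cc_key_strict (a b : ℝ) (hab : a ≠ b) : 1 + a*b < cc a * cc b := by
  rcases le_or_gt (1 + a*b) 0 with h | h
  · exact lt_of_le_of_lt h (mul_pos (cc_pos a) (cc_pos b))
  · have h2 : (1 + a*b)^2 < (cc a * cc b)^2 := by
      rw [mul_pow, cc_sq, cc_sq]
      have : (a-b)^2 > 0 := by have := sub_ne_zero.mpr hab; positivity
      nlinarith
    nlinarith [mul_pos (cc_pos a) (cc_pos b)]

lemma cc_le_cc {a b : ℝ} (ha : 0 ≤ a) (hab : a ≤ b) : cc a ≤ cc b := by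
  apply Real.sqrt_le_sqrt; nlinarith

lemma cc_lt_cc {a b : ℝ} (ha : 0 ≤ a) (hab : a < b) : cc a < cc b := by
  apply Real.sqrt_lt_sqrt (by positivity); nlinarith

/-- canonical piecewise-linear function -/
def ev (K : Finset ℝ) (ν : ℝ → ℝ) (α β : ℝ) : ℝ → ℝ :=
  fun t => α + β * t + ∑ p ∈ K, ν p * max (t - p) 0

/-- canonical cost -/
def cost (K : Finset ℝ) (ν : ℝ → ℝ) : ℝ := ∑ p ∈ K, 2 * |ν p| * cc p

lemma cost_nonneg (K : Finset ℝ) (ν : ℝ → ℝ) : 0 ≤ cost K ν :=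
  Finset.sum_nonneg fun p _ => mul_nonneg (by positivity) (cc_pos p).le

/-- interpolation of the data by a canonical function -/
def InterpC (n : ℕ) (x y : ℕ → ℝ) (K : Finset ℝ) (ν : ℝ → ℝ) (α β : ℝ) : Prop :=
  ∀ l, l < n → ev K ν α β (x l) = y l

/-- canonical minimality -/
def MinC (n : ℕ) (x y : ℕ → ℝ) (K : Finset ℝ) (ν : ℝ → ℝ) (α β : ℝ) : Prop :=
  InterpC n x y K ν α β ∧
  ∀ K' ν' α' β', InterpC n x y K' ν' α' β' → cost K ν ≤ cost K' ν'

/-- master evaluation identity -/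
lemma ev_diff (K : Finset ℝ) (ν : ℝ → ℝ) (α β : ℝ) {t' t : ℝ} (h : t' ≤ t) :
    ev K ν α β t - ev K ν α β t' =
      (β + ∑ p ∈ K.filter (· ≤ t'), ν p) * (t - t') +
        ∑ p ∈ K.filter (fun p => t' < p ∧ p < t), ν p * (t - p) := by
  have key : ∀ p ∈ K, ν p * max (t - p) 0 - ν p * max (t' - p) 0 =
      (if p ≤ t' then ν p * (t - t') else 0) +
      (if t' < p ∧ p < t then ν p * (t - p) else 0) := by
    intro p _
    rcases le_or_gt p t' with hp | hp
    · rw [if_pos hp, if_neg (by intro hc; linarith [hc.1])]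
      rw [max_eq_left (by linarith), max_eq_left (by linarith)]; ring
    · rcases lt_or_ge p t with hpt | hpt
      · rw [if_neg (by intro hc; linarith), if_pos ⟨hp, hpt⟩]
        rw [max_eq_left (by linarith), max_eq_right (by linarith)]; ring
      · rw [if_neg (by intro hc; linarith), if_neg (by intro hc; linarith [hc.2])]
        rw [max_eq_right (by linarith), max_eq_right (by linarith)]; ring
  have : ∑ p ∈ K, ν p * max (t - p) 0 - ∑ p ∈ K, ν p * max (t' - p) 0 =
      (∑ p ∈ K.filter (· ≤ t'), ν p) * (t - t') +
        ∑ p ∈ K.filter (fun p => t' < p ∧ p < t), ν p * (t - p) := by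
    rw [← Finset.sum_sub_distrib, Finset.sum_congr rfl key, Finset.sum_add_distrib,
      Finset.sum_ite, Finset.sum_const_zero, add_zero, Finset.sum_ite, Finset.sum_const_zero,
      add_zero, Finset.sum_mul]
  simp only [ev]
  ring_nf
  ring_nf at this
  linarith [this]

/-- left slope of `ev` at a point -/
def slopeL (K : Finset ℝ) (ν : ℝ → ℝ) (β c : ℝ) : ℝ := β + ∑ p ∈ K.filter (· < c), ν p

lemma sum_filter_le_split (K : Finset ℝ) (ν : ℝ → ℝ) {b c : ℝ} (h : b < c) :
    ∑ p ∈ K.filter (· < c), ν p =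
      (∑ p ∈ K.filter (· ≤ b), ν p) + ∑ p ∈ K.filter (fun p => b < p ∧ p < c), ν p := by
  rw [← Finset.sum_filter_add_sum_filter_not (K.filter (· < c)) (· ≤ b), Finset.filter_filter,
    Finset.filter_filter]
  congr 1
  · apply Finset.sum_congr _ (fun _ _ => rfl)
    apply Finset.filter_congr; intro p _; constructor
    · intro hp; exact hp.2
    · intro hp; exact ⟨lt_of_le_of_lt hp h, hp⟩
  · apply Finset.sum_congr _ (fun _ _ => rfl)
    apply Finset.filter_congr; intro p _
    constructor
    · intro hp; exact ⟨lt_of_not_ge hp.2, hp.1⟩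
    · intro hp; exact ⟨hp.2, not_le.mpr hp.1⟩

lemma sum_filter_le_eq (K : Finset ℝ) (ν : ℝ → ℝ) (c : ℝ) :
    ∑ p ∈ K.filter (· ≤ c), ν p =
      (∑ p ∈ K.filter (· < c), ν p) + (if c ∈ K then ν c else 0) := by
  rw [← Finset.sum_filter_add_sum_filter_not (K.filter (· ≤ c)) (· < c), Finset.filter_filter,
    Finset.filter_filter]
  congr 1
  · apply Finset.sum_congr _ (fun _ _ => rfl)
    apply Finset.filter_congr; intro p _; constructor
    · intro hp; exact hp.2
    · intro hp; exact ⟨hp.le, hp⟩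
  · have : K.filter (fun a => a ≤ c ∧ ¬ a < c) = K.filter (fun a => a = c) := by
      apply Finset.filter_congr; intro p _; constructor
      · intro hp; exact le_antisymm hp.1 (not_lt.mp hp.2)
      · intro hp; exact ⟨hp.le, by rw [hp]; exact lt_irrefl c⟩
    rw [this, Finset.filter_eq']
    split
    · rw [Finset.sum_singleton]
    · rw [Finset.sum_empty]

/-- on a small left interval, `ev` is affine -/
lemma ev_left_affine (K : Finset ℝ) (ν : ℝ → ℝ) (α β c : ℝ) :
    ∃ η > 0, ∀ t, c - η < t → t < c →
      ev K ν α β t = ev K ν α β c + slopeL K ν β c * (t - c) := by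
  classical
  set F := K.filter (· < c) with hF
  refine ⟨if h : F.Nonempty then c - F.max' h else 1, ?_, ?_⟩
  · split
    · rename_i h
      have : F.max' h < c := (Finset.mem_filter.mp (F.max'_mem h)).2
      linarith
    · norm_num
  · intro t ht htc
    have hmax : ∀ p ∈ F, p ≤ t := by
      intro p hp
      by_contra hc
      push_neg at hc
      have hne : F.Nonempty := ⟨p, hp⟩
      rw [dif_pos hne] at ht
      have := F.le_max' p hp
      linarith
    have hdiff := ev_diff K ν α β htc.le
    have h1 : K.filter (· ≤ t) = F := by
      apply Finset.ext; intro p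
      simp only [hF, Finset.mem_filter]
      constructor
      · intro hp; exact ⟨hp.1, lt_of_le_of_lt hp.2 htc⟩
      · intro hp; exact ⟨hp.1, hmax p (Finset.mem_filter.mpr hp)⟩
    have h2 : K.filter (fun p => t < p ∧ p < c) = ∅ := by
      apply Finset.filter_false_of_mem
      intro p hp hc
      have : p ∈ F := Finset.mem_filter.mpr ⟨hp, hc.2⟩
      exact absurd (hmax p this) (not_le.mpr hc.1)
    rw [h1, h2, Finset.sum_empty, add_zero] at hdiff
    simp only [slopeL, hF]
    linarith [hdiff]

/-- the left derivative of `ev` -/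
lemma ev_hasDerivWithinAt (K : Finset ℝ) (ν : ℝ → ℝ) (α β c : ℝ) :
    HasDerivWithinAt (ev K ν α β) (slopeL K ν β c) (Set.Iio c) c := by
  obtain ⟨η, hη, haff⟩ := ev_left_affine K ν α β c
  have hg : HasDerivWithinAt (fun t => ev K ν α β c + slopeL K ν β c * (t - c))
      (slopeL K ν β c) (Set.Iio c) c := by
    have : HasDerivAt (fun t => ev K ν α β c + slopeL K ν β c * (t - c))
        (slopeL K ν β c) c := by
      simpa using ((hasDerivAt_id c).sub_const c).const_mul (slopeL K ν β c)
        |>.const_add (ev K ν α β c)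
    exact this.hasDerivWithinAt
  apply hg.congr_of_eventuallyEq _ (by simp)
  filter_upwards [Filter.inter_mem_inf (Metric.ball_mem_nhds c hη) (Filter.mem_principal_self _)]
  rintro t ⟨htb, htio⟩
  have htc : t < c := htio
  have : c - η < t := by
    have := Real.dist_eq t c ▸ Metric.mem_ball.mp htb
    have h2 := abs_lt.mp this
    linarith [h2.1]
  exact haff t this htc


/-- The fundamental exchange inequality. -/
lemma swap {n : ℕ} {x y : ℕ → ℝ} {K : Finset ℝ} {ν : ℝ → ℝ} {α β : ℝ}
    (hmin : MinC n x y K ν α β) {S : Finset ℝ} (hS : S ⊆ K)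
    (K' : Finset ℝ) (ν' : ℝ → ℝ) (dα dβ : ℝ)
    (hval : ∀ l, l < n →
      dα + dβ * x l + ∑ p ∈ K', ν' p * max (x l - p) 0
        = ∑ p ∈ S, ν p * max (x l - p) 0) :
    ∑ p ∈ S, 2 * |ν p| * cc p ≤ ∑ p ∈ K', 2 * |ν' p| * cc p := by
  classical
  set K₂ : Finset ℝ := (K \ S) ∪ K' with hK₂
  set ν₂ : ℝ → ℝ := fun q => (if q ∈ K \ S then ν q else 0) + (if q ∈ K' then ν' q else 0)
    with hν₂
  have hsum : ∀ g : ℝ → ℝ, ∑ q ∈ K₂, ν₂ q * g q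
      = ∑ q ∈ K \ S, ν q * g q + ∑ q ∈ K', ν' q * g q := by
    intro g
    have h1 : ∑ q ∈ K₂, (if q ∈ K \ S then ν q * g q else 0) = ∑ q ∈ K \ S, ν q * g q := by
      rw [Finset.sum_ite_mem, Finset.inter_eq_right.mpr Finset.subset_union_left]
    have h2 : ∑ q ∈ K₂, (if q ∈ K' then ν' q * g q else 0) = ∑ q ∈ K', ν' q * g q := by
      rw [Finset.sum_ite_mem, Finset.inter_eq_right.mpr Finset.subset_union_right]
    rw [← h1, ← h2, ← Finset.sum_add_distrib]
    apply Finset.sum_congr rfl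
    intro q _
    simp only [hν₂, add_mul, ite_mul, zero_mul]
  have hinterp : InterpC n x y K₂ ν₂ (α + dα) (β + dβ) := by
    intro l hl
    have hK : ∑ q ∈ K \ S, ν q * max (x l - q) 0
        = ∑ q ∈ K, ν q * max (x l - q) 0 - ∑ q ∈ S, ν q * max (x l - q) 0 :=
      Finset.sum_sdiff_eq_sub hS
    have := hval l hl
    have hy := hmin.1 l hl
    simp only [ev] at hy ⊢
    rw [hsum, hK]
    linarith [this, hy]
  have hcost := hmin.2 K₂ ν₂ (α + dα) (β + dβ) hinterp
  have hbound : cost K₂ ν₂ ≤ ∑ q ∈ K \ S, 2 * |ν q| * cc q + ∑ q ∈ K', 2 * |ν' q| * cc q := by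
    have h1 : ∑ q ∈ K₂, (if q ∈ K \ S then 2 * |ν q| * cc q else 0)
        = ∑ q ∈ K \ S, 2 * |ν q| * cc q := by
      rw [Finset.sum_ite_mem, Finset.inter_eq_right.mpr Finset.subset_union_left]
    have h2 : ∑ q ∈ K₂, (if q ∈ K' then 2 * |ν' q| * cc q else 0)
        = ∑ q ∈ K', 2 * |ν' q| * cc q := by
      rw [Finset.sum_ite_mem, Finset.inter_eq_right.mpr Finset.subset_union_right]
    rw [← h1, ← h2, ← Finset.sum_add_distrib]
    apply Finset.sum_le_sum
    intro q _
    have habs : |ν₂ q| ≤ |if q ∈ K \ S then ν q else 0| + |if q ∈ K' then ν' q else 0| :=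
      abs_add_le _ _
    have e1 : |if q ∈ K \ S then ν q else 0| = if q ∈ K \ S then |ν q| else 0 := by
      split <;> simp
    have e2 : |if q ∈ K' then ν' q else 0| = if q ∈ K' then |ν' q| else 0 := by
      split <;> simp
    rw [e1, e2] at habs
    have hcc := (cc_pos q).le
    have h3 : 2 * |ν₂ q| * cc q ≤ 2 * ((if q ∈ K \ S then |ν q| else 0)
        + (if q ∈ K' then |ν' q| else 0)) * cc q := by
      apply mul_le_mul_of_nonneg_right _ hcc
      linarith
    refine h3.trans (le_of_eq ?_)
    split <;> split <;> ring
  have hcostK : cost K ν = ∑ q ∈ K \ S, 2 * |ν q| * cc q + ∑ q ∈ S, 2 * |ν q| * cc q := by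
    unfold cost
    rw [Finset.sum_sdiff_eq_sub hS]; ring
  rw [hcostK] at hcost
  unfold cost at hbound
  linarith [hcost.trans hbound]


lemma abs_mul_cc {w b : ℝ} (hw : w ≠ 0) : |w| * cc (-b / w) = Real.sqrt (w^2 + b^2) := by
  have h1 : |w| = Real.sqrt (w^2) := (Real.sqrt_sq_eq_abs w).symm
  rw [h1, cc, ← Real.sqrt_mul (sq_nonneg w)]
  congr 1
  field_simp

/-- Any canonical function can be realized as a network of matching cost. -/
lemma realize (K : Finset ℝ) (ν : ℝ → ℝ) (α β : ℝ) :
    ∃ (m : ℕ) (a w b : Fin m → ℝ) (a₀ b₀ : ℝ),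
      netFun m a w b a₀ b₀ = ev K ν α β ∧ normSq m a w b ≤ cost K ν := by
  classical
  set m := K.card with hm
  set P : Fin m → ℝ := fun j => ((K.equivFin.symm j : {q // q ∈ K}) : ℝ) with hP
  set w : Fin m → ℝ := fun j => if ν (P j) = 0 then 0 else Real.sqrt (|ν (P j)| / cc (P j))
    with hw
  set a : Fin m → ℝ := fun j => if ν (P j) = 0 then 0 else ν (P j) / w j with ha
  set b : Fin m → ℝ := fun j => - (w j * P j) with hb
  have hwpos : ∀ j, ν (P j) ≠ 0 → 0 < w j := by
    intro j hj
    simp only [hw, if_neg hj]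
    apply Real.sqrt_pos.mpr
    apply div_pos (abs_pos.mpr hj) (cc_pos _)
  have hneuron : ∀ j, ∀ t, a j * max (w j * t + b j) 0 = ν (P j) * max (t - P j) 0 := by
    intro j t
    by_cases hj : ν (P j) = 0
    · simp [ha, hj, hw]
    · have hwj := hwpos j hj
      have : w j * t + b j = w j * (t - P j) := by simp only [hb]; ring
      rw [this]
      have h2 : max (w j * (t - P j)) 0 = w j * max (t - P j) 0 := by
        rcases le_total (t - P j) 0 with h | h
        · rw [max_eq_right (by nlinarith), max_eq_right h, mul_zero]
        · rw [max_eq_left (mul_nonneg hwj.le h), max_eq_left h]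
      rw [h2]
      simp only [ha, if_neg hj]
      field_simp
  have hcostj : ∀ j, a j ^2 + w j ^2 + b j ^2 = 2 * |ν (P j)| * cc (P j) := by
    intro j
    by_cases hj : ν (P j) = 0
    · simp [ha, hj, hw, hb]
    · have hwj := hwpos j hj
      have hw2 : w j ^ 2 = |ν (P j)| / cc (P j) := by
        simp only [hw, if_neg hj]
        rw [Real.sq_sqrt (le_of_lt (div_pos (abs_pos.mpr hj) (cc_pos _)))]
      have ha2 : a j ^ 2 = ν (P j)^2 / (w j ^2) := by
        simp only [ha, if_neg hj]
        rw [div_pow]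
      have hb2 : b j ^2 = w j ^2 * P j ^2 := by simp only [hb]; ring
      have hccp := cc_pos (P j)
      have hccsq := cc_sq (P j)
      have habspos : 0 < |ν (P j)| := abs_pos.mpr hj
      have hne1 : |ν (P j)| ≠ 0 := habspos.ne'
      have hne2 : cc (P j) ≠ 0 := hccp.ne'
      have e1 : a j ^ 2 = |ν (P j)| * cc (P j) := by
        rw [ha2, hw2, show ν (P j)^2 = |ν (P j)|^2 from (sq_abs _).symm]
        field_simp
      have e2 : w j ^2 + b j ^2 = |ν (P j)| * cc (P j) := by
        rw [hb2, hw2]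
        have : |ν (P j)| / cc (P j) + |ν (P j)| / cc (P j) * P j ^ 2
            = |ν (P j)| / cc (P j) * (cc (P j))^2 := by rw [hccsq]; ring
        rw [this]
        field_simp
      rw [show a j ^2 + w j ^2 + b j ^2 = a j ^2 + (w j ^2 + b j ^2) by ring, e1, e2]
      ring
  have hsump : ∀ F : ℝ → ℝ, ∑ j : Fin m, F (P j) = ∑ q ∈ K, F q := by
    intro F
    rw [← Finset.sum_coe_sort K F]
    exact Fintype.sum_equiv K.equivFin.symm (fun j => F (P j)) (fun q => F ↑q) (fun j => rfl)
  refine ⟨m, a, w, b, β, α, ?_, ?_⟩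
  · funext t
    simp only [netFun, ev]
    have h1 : ∑ j : Fin m, a j * max (w j * t + b j) 0
        = ∑ j : Fin m, ν (P j) * max (t - P j) 0 := by
      apply Finset.sum_congr rfl; intro j _; exact hneuron j t
    rw [h1, hsump (fun q => ν q * max (t - q) 0)]
    ring
  · apply le_of_eq
    simp only [normSq, cost]
    calc ∑ j : Fin m, (a j ^2 + w j ^2 + b j ^2)
        = ∑ j : Fin m, 2 * |ν (P j)| * cc (P j) := by
          apply Finset.sum_congr rfl; intro j _; exact hcostj j
      _ = ∑ q ∈ K, 2 * |ν q| * cc q := hsump (fun q => 2 * |ν q| * cc q)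


/-- per-neuron canonical decomposition -/
lemma neuron_decomp (a w b : ℝ) (t : ℝ) :
    a * max (w * t + b) 0 =
      (if w ≠ 0 then (a * |w|) * max (t - (-b / w)) 0 else 0)
      + (if w < 0 then a * w * t + a * b else 0)
      + (if w = 0 then a * max b 0 else 0) := by
  rcases lt_trichotomy w 0 with hw | hw | hw
  · rw [if_pos hw.ne, if_pos hw, if_neg hw.ne]
    have habs : |w| = -w := abs_of_neg hw
    have hτw : w * (-b / w) = -b := by rw [mul_comm]; exact div_mul_cancel₀ (-b) hw.ne
    have h1 : w * t + b = (-w) * ((-b/w) - t) := by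
      rw [show (-w) * ((-b/w) - t) = -(w * (-b/w)) + w * t by ring, hτw]; ring
    have h2 : max ((-w) * ((-b/w) - t)) 0 = (-w) * max ((-b/w) - t) 0 := by
      rcases le_total ((-b/w) - t) 0 with h | h
      · rw [max_eq_right (by nlinarith), max_eq_right h, mul_zero]
      · rw [max_eq_left (mul_nonneg (by linarith) h), max_eq_left h]
    have h3 : max ((-b/w) - t) 0 = max (t - (-b/w)) 0 - (t - (-b/w)) := by
      rcases le_total (t - (-b/w)) 0 with h | h
      · rw [max_eq_right h, max_eq_left (by linarith)]; ring
      · rw [max_eq_left h, max_eq_right (by linarith)]; ring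
    rw [h1, h2, h3, habs]
    linear_combination (-a) * hτw
  · rw [if_neg (by simpa using hw), if_neg (by rw [hw]; exact lt_irrefl 0), if_pos hw, hw]
    simp
  · rw [if_pos hw.ne', if_neg (by linarith), if_neg hw.ne']
    have habs : |w| = w := abs_of_pos hw
    have hτw : w * (-b / w) = -b := by rw [mul_comm]; exact div_mul_cancel₀ (-b) hw.ne'
    have h1 : w * t + b = w * (t - (-b/w)) := by
      rw [show w * (t - (-b/w)) = w * t - w * (-b/w) by ring, hτw]; ring
    have h2 : max (w * (t - (-b/w))) 0 = w * max (t - (-b/w)) 0 := by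
      rcases le_total (t - (-b/w)) 0 with h | h
      · rw [max_eq_right (by nlinarith), max_eq_right h, mul_zero]
      · rw [max_eq_left (mul_nonneg hw.le h), max_eq_left h]
    rw [h1, h2, habs]
    ring

/-- Extraction of a canonical minimal interpolant from a minimal network. -/
lemma extract {n : ℕ} {x y : ℕ → ℝ} {f : ℝ → ℝ}
    (hf : IsMinNormNet (fun i : Fin n => (x i, y i)) f) :
    ∃ K ν α β, f = ev K ν α β ∧ MinC n x y K ν α β := by
  classical
  obtain ⟨m, a, w, b, a₀, b₀, hfe, hint, hminNet⟩ := hf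
  set J : Finset (Fin m) := Finset.univ.filter (fun j => w j ≠ 0) with hJ
  set τ : Fin m → ℝ := fun j => -b j / w j with hτ
  set K : Finset ℝ := J.image τ with hK
  set ν : ℝ → ℝ := fun p => ∑ j ∈ J.filter (fun j => τ j = p), a j * |w j| with hν
  set β : ℝ := a₀ + ∑ j ∈ Finset.univ.filter (fun j => w j < 0), a j * w j with hβ
  set α : ℝ := b₀ + (∑ j ∈ Finset.univ.filter (fun j => w j < 0), a j * b j)
      + ∑ j ∈ Finset.univ.filter (fun j => w j = 0), a j * max (b j) 0 with hα
  have hmaps : ∀ j ∈ J, τ j ∈ K := fun j hj => Finset.mem_image_of_mem τ hj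
  have hgroup : ∀ G : ℝ → ℝ, ∑ p ∈ K, ν p * G p = ∑ j ∈ J, a j * |w j| * G (τ j) := by
    intro G
    rw [← Finset.sum_fiberwise_of_maps_to hmaps (fun j => a j * |w j| * G (τ j))]
    apply Finset.sum_congr rfl
    intro p _
    rw [hν, Finset.sum_mul]
    apply Finset.sum_congr rfl
    intro j hj
    rw [(Finset.mem_filter.mp hj).2]
  have hfev : f = ev K ν α β := by
    funext t
    rw [hfe]
    simp only [netFun, ev]
    rw [hgroup (fun p => max (t - p) 0)]
    have hsplit : ∀ j : Fin m, a j * max (w j * t + b j) 0 =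
        (if w j ≠ 0 then (a j * |w j|) * max (t - τ j) 0 else 0)
        + (if w j < 0 then a j * w j * t + a j * b j else 0)
        + (if w j = 0 then a j * max (b j) 0 else 0) := fun j => neuron_decomp (a j) (w j) (b j) t
    rw [Finset.sum_congr rfl (fun j _ => hsplit j), Finset.sum_add_distrib,
      Finset.sum_add_distrib, Finset.sum_ite, Finset.sum_const_zero, add_zero,
      Finset.sum_ite, Finset.sum_const_zero, add_zero,
      Finset.sum_ite, Finset.sum_const_zero, add_zero]
    have e2 : ∑ j ∈ Finset.univ.filter (fun j => w j < 0), (a j * w j * t + a j * b j)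
        = (∑ j ∈ Finset.univ.filter (fun j => w j < 0), a j * w j) * t
          + ∑ j ∈ Finset.univ.filter (fun j => w j < 0), a j * b j := by
      rw [Finset.sum_add_distrib, Finset.sum_mul]
    rw [e2]
    simp only [hJ, hβ, hα]
    ring
  have hcost : cost K ν ≤ normSq m a w b := by
    have h1 : cost K ν ≤ ∑ j ∈ J, 2 * (|a j| * |w j|) * cc (τ j) := by
      unfold cost
      rw [← Finset.sum_fiberwise_of_maps_to hmaps (fun j => 2 * (|a j| * |w j|) * cc (τ j))]
      apply Finset.sum_le_sum
      intro p _
      have habs : |ν p| ≤ ∑ j ∈ J.filter (fun j => τ j = p), |a j| * |w j| := by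
        rw [hν]
        refine (Finset.abs_sum_le_sum_abs _ _).trans (le_of_eq ?_)
        apply Finset.sum_congr rfl
        intro j _
        rw [abs_mul, abs_abs]
      have hccp := cc_pos p
      calc 2 * |ν p| * cc p ≤ 2 * (∑ j ∈ J.filter (fun j => τ j = p), (|a j| * |w j|)) * cc p := by
            apply mul_le_mul_of_nonneg_right _ hccp.le
            linarith
        _ = ∑ j ∈ J.filter (fun j => τ j = p), 2 * (|a j| * |w j|) * cc p := by
            rw [Finset.mul_sum, Finset.sum_mul]
        _ = ∑ j ∈ J.filter (fun j => τ j = p), 2 * (|a j| * |w j|) * cc (τ j) := by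
            apply Finset.sum_congr rfl
            intro j hj
            rw [(Finset.mem_filter.mp hj).2]
    have h2 : ∀ j ∈ J, 2 * (|a j| * |w j|) * cc (τ j) ≤ a j ^2 + w j ^2 + b j ^2 := by
      intro j hj
      have hwj : w j ≠ 0 := (Finset.mem_filter.mp hj).2
      simp only [hτ]
      have hmc := abs_mul_cc (b := b j) hwj
      have : 2 * (|a j| * |w j|) * cc (-b j / w j) = 2 * |a j| * Real.sqrt ((w j)^2 + (b j)^2) := by
        rw [← hmc]; ring
      rw [this]
      have hs : Real.sqrt ((w j)^2 + (b j)^2) ^ 2 = (w j)^2 + (b j)^2 :=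
        Real.sq_sqrt (by positivity)
      nlinarith [two_mul_le_add_sq (|a j|) (Real.sqrt ((w j)^2 + (b j)^2)), sq_abs (a j),
        Real.sqrt_nonneg ((w j)^2 + (b j)^2)]
    calc cost K ν ≤ ∑ j ∈ J, 2 * (|a j| * |w j|) * cc (τ j) := h1
      _ ≤ ∑ j ∈ J, (a j ^2 + w j ^2 + b j ^2) := Finset.sum_le_sum h2
      _ ≤ ∑ j : Fin m, (a j ^2 + w j ^2 + b j ^2) := by
          apply Finset.sum_le_sum_of_subset_of_nonneg (Finset.subset_univ J)
          intro j _ _; positivity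
      _ = normSq m a w b := rfl
  refine ⟨K, ν, α, β, hfev, ?_, ?_⟩
  · intro l hl
    rw [← hfev]
    exact hint ⟨l, hl⟩
  · intro K' ν' α' β' hinterp'
    obtain ⟨m', a', w', b', a₀', b₀', hnet', hnorm'⟩ := realize K' ν' α' β'
    have hInt' : Interpolates (fun i : Fin n => (x i, y i)) (netFun m' a' w' b' a₀' b₀') := by
      intro i
      simp only
      rw [hnet']
      exact hinterp' i i.2
    calc cost K ν ≤ normSq m a w b := hcost
      _ ≤ normSq m' a' w' b' := hminNet m' a' w' b' a₀' b₀' hInt'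
      _ ≤ cost K' ν' := hnorm'


/-- kink at `p ∈ (x₀, q)` is strictly cheaper than the same (rescaled) kink at `q`,
pivoting at `x₀`. -/
lemma cc_ratio {x0 p q : ℝ} (h0 : 0 ≤ x0) (h1 : x0 < p) (h2 : p < q) :
    (p - x0) * cc q < cc p * (q - x0) := by
  have hp : 0 ≤ p := h0.trans h1.le
  have hsq : (p * cc q)^2 < (q * cc p)^2 := by
    rw [mul_pow, mul_pow, cc_sq, cc_sq]; nlinarith
  have h3 : p * cc q < q * cc p := by
    nlinarith [mul_nonneg hp (cc_pos q).le, mul_nonneg (hp.trans h2.le) (cc_pos p).le]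
  have h4 : x0 * cc p ≤ x0 * cc q :=
    mul_le_mul_of_nonneg_left (cc_le_cc hp h2.le) h0
  nlinarith

/-- mirror version: kink at `p ∈ (a, X)` is strictly cheaper than at `a`, pivoting at `X`. -/
lemma cc_ratio' {a p X : ℝ} (h0 : 0 ≤ a) (h1 : a < p) (h2 : p < X) :
    cc a * (X - p) < cc p * (X - a) := by
  have := cc_lt_cc h0 h1
  nlinarith [cc_pos a, cc_pos p]

/-- In a canonical minimizer there is no kink strictly to the left of the second data point. -/
lemma Tleft {n : ℕ} {x y : ℕ → ℝ} {K : Finset ℝ} {ν : ℝ → ℝ} {α β : ℝ}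
    (hn : 2 ≤ n) (hx0 : 0 ≤ x 0) (hs : ∀ i j, i < j → j < n → x i < x j)
    (hmin : MinC n x y K ν α β) :
    ∀ p ∈ K, p < x 1 → ν p = 0 := by
  classical
  by_contra hcon
  push_neg at hcon
  obtain ⟨p₀, hp₀K, hp₀lt, hν₀⟩ := hcon
  have h01 : x 0 < x 1 := hs 0 1 one_pos hn
  have hg : 0 < x 1 - x 0 := by linarith
  set S : Finset ℝ := K.filter (· < x 1) with hSdef
  have hS : S ⊆ K := Finset.filter_subset _ _
  have hp₀S : p₀ ∈ S := Finset.mem_filter.mpr ⟨hp₀K, hp₀lt⟩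
  set S' : Finset ℝ := S.filter (fun p => x 0 < p) with hS'def
  have hsub : S' ⊆ S := Finset.filter_subset _ _
  set M₀ : ℝ := ∑ p ∈ S, ν p with hM₀
  set M₁ : ℝ := ∑ p ∈ S, ν p * p with hM₁
  set νT : ℝ := (∑ p ∈ S', ν p * (p - x 0)) / (x 1 - x 0) with hνT
  set dβ : ℝ := M₀ - νT with hdβ
  set dα : ℝ := νT * x 1 - M₁ with hdα
  have hνTg : νT * (x 1 - x 0) = ∑ p ∈ S', ν p * (p - x 0) := by
    rw [hνT]; field_simp
  have hval : ∀ l, l < n →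
      dα + dβ * x l + ∑ q ∈ ({x 1} : Finset ℝ), νT * max (x l - q) 0
        = ∑ p ∈ S, ν p * max (x l - p) 0 := by
    intro l hl
    rw [Finset.sum_singleton]
    rcases Nat.eq_zero_or_pos l with hl0 | hlpos
    · subst hl0
      rw [max_eq_right (by linarith), mul_zero, add_zero]
      have hmaxsplit : ∀ p : ℝ, max (x 0 - p) 0 = max (p - x 0) 0 - (p - x 0) := by
        intro p
        rcases le_total (p - x 0) 0 with h | h
        · rw [max_eq_right h, max_eq_left (by linarith)]; ring
        · rw [max_eq_left h, max_eq_right (by linarith)]; ring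
      have hRHS : ∑ p ∈ S, ν p * max (x 0 - p) 0
          = (∑ p ∈ S, ν p * max (p - x 0) 0) - (M₁ - M₀ * x 0) := by
        rw [show (∑ p ∈ S, ν p * max (p - x 0) 0) - (M₁ - M₀ * x 0)
            = ∑ p ∈ S, (ν p * max (p - x 0) 0 - (ν p * p - ν p * x 0)) by
          rw [Finset.sum_sub_distrib, Finset.sum_sub_distrib, hM₁, hM₀, Finset.sum_mul]]
        apply Finset.sum_congr rfl
        intro p _
        rw [hmaxsplit p]; ring
      have hpos : ∑ p ∈ S, ν p * max (p - x 0) 0 = ∑ p ∈ S', ν p * (p - x 0) := by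
        have e1 : ∑ p ∈ S', ν p * (p - x 0) = ∑ p ∈ S', ν p * max (p - x 0) 0 := by
          apply Finset.sum_congr rfl
          intro p hp
          have : x 0 < p := (Finset.mem_filter.mp hp).2
          rw [max_eq_left (by linarith)]
        rw [e1]
        refine (Finset.sum_subset hsub ?_).symm
        intro p _ hpn
        have : ¬ x 0 < p := by
          intro hc
          exact hpn (Finset.mem_filter.mpr ⟨‹p ∈ S›, hc⟩)
        rw [max_eq_right (by linarith [not_lt.mp this]), mul_zero]
      rw [hRHS, hpos, ← hνTg, hdα, hdβ]
      ring
    · have hx1l : x 1 ≤ x l := by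
        rcases Nat.lt_or_ge 1 l with h | h
        · exact (hs 1 l h hl).le
        · have : l = 1 := le_antisymm h hlpos
          rw [this]
      rw [max_eq_left (by linarith)]
      have hRHS : ∑ p ∈ S, ν p * max (x l - p) 0 = M₀ * x l - M₁ := by
        rw [hM₀, hM₁, Finset.sum_mul, ← Finset.sum_sub_distrib]
        apply Finset.sum_congr rfl
        intro p hp
        have hpx : p < x 1 := (Finset.mem_filter.mp hp).2
        rw [max_eq_left (by linarith)]; ring
      rw [hRHS, hdα, hdβ]
      ring
  have hswap := swap hmin hS {x 1} (fun _ => νT) dα dβ hval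
  rw [Finset.sum_singleton] at hswap
  -- now derive the strict opposite inequality
  have hterm : ∀ p ∈ S', 2 * |ν p| * ((p - x 0) / (x 1 - x 0) * cc (x 1)) ≤ 2 * |ν p| * cc p := by
    intro p hp
    have hx0p : x 0 < p := (Finset.mem_filter.mp hp).2
    have hpS : p ∈ S := (Finset.mem_filter.mp hp).1
    have hpx1 : p < x 1 := (Finset.mem_filter.mp hpS).2
    have hratio : (p - x 0) / (x 1 - x 0) * cc (x 1) ≤ cc p := by
      rw [div_mul_eq_mul_div, div_le_iff₀ hg]
      exact (cc_ratio hx0 hx0p hpx1).le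
    apply mul_le_mul_of_nonneg_left hratio (by positivity)
  have hνTbound : 2 * |νT| * cc (x 1)
      ≤ ∑ p ∈ S', 2 * |ν p| * ((p - x 0) / (x 1 - x 0) * cc (x 1)) := by
    have habs : |νT| ≤ ∑ p ∈ S', |ν p| * ((p - x 0) / (x 1 - x 0)) := by
      rw [hνT, abs_div, abs_of_pos hg, div_le_iff₀ hg]
      rw [Finset.sum_mul]
      refine (Finset.abs_sum_le_sum_abs _ _).trans (Finset.sum_le_sum ?_)
      intro p hp
      have hx0p : x 0 < p := (Finset.mem_filter.mp hp).2
      rw [abs_mul, abs_of_pos (by linarith : (0:ℝ) < p - x 0)]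
      have he : |ν p| * ((p - x 0) / (x 1 - x 0)) * (x 1 - x 0) = |ν p| * (p - x 0) := by
        field_simp
      rw [he]
    calc 2 * |νT| * cc (x 1) ≤ 2 * (∑ p ∈ S', |ν p| * ((p - x 0) / (x 1 - x 0))) * cc (x 1) := by
          have := cc_pos (x 1)
          nlinarith [abs_nonneg νT]
      _ = ∑ p ∈ S', 2 * |ν p| * ((p - x 0) / (x 1 - x 0) * cc (x 1)) := by
          rw [Finset.mul_sum, Finset.sum_mul]
          apply Finset.sum_congr rfl
          intro p _; ring
  have hstrict : ∑ p ∈ S', 2 * |ν p| * cc p < ∑ p ∈ S, 2 * |ν p| * cc p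
      ∨ (p₀ ∈ S' ∧ ∑ p ∈ S', 2 * |ν p| * ((p - x 0) / (x 1 - x 0) * cc (x 1))
          < ∑ p ∈ S', 2 * |ν p| * cc p) := by
    by_cases hp₀' : p₀ ∈ S'
    · right
      refine ⟨hp₀', Finset.sum_lt_sum hterm ⟨p₀, hp₀', ?_⟩⟩
      have hx0p : x 0 < p₀ := (Finset.mem_filter.mp hp₀').2
      have hratio : (p₀ - x 0) / (x 1 - x 0) * cc (x 1) < cc p₀ := by
        rw [div_mul_eq_mul_div, div_lt_iff₀ hg]
        exact cc_ratio hx0 hx0p hp₀lt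
      have : 0 < |ν p₀| := abs_pos.mpr hν₀
      nlinarith
    · left
      apply Finset.sum_lt_sum_of_subset hsub hp₀S hp₀'
      · have : 0 < |ν p₀| := abs_pos.mpr hν₀
        nlinarith [cc_pos p₀]
      · intro j _ _
        exact mul_nonneg (by positivity) (cc_pos j).le
  have hFG : ∑ p ∈ S', 2 * |ν p| * ((p - x 0) / (x 1 - x 0) * cc (x 1))
      ≤ ∑ p ∈ S', 2 * |ν p| * cc p := Finset.sum_le_sum hterm
  have hS'S : ∑ p ∈ S', 2 * |ν p| * cc p ≤ ∑ p ∈ S, 2 * |ν p| * cc p := by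
    apply Finset.sum_le_sum_of_subset_of_nonneg hsub
    intro j _ _
    exact mul_nonneg (by positivity) (cc_pos j).le
  rcases hstrict with hlt | ⟨_, hlt⟩
  · linarith
  · linarith


/-- In a canonical minimizer there is no kink strictly to the right of `x (n-2)`. -/
lemma Tright {n : ℕ} {x y : ℕ → ℝ} {K : Finset ℝ} {ν : ℝ → ℝ} {α β : ℝ}
    (hn : 2 ≤ n) (hx0 : 0 ≤ x 0) (hs : ∀ i j, i < j → j < n → x i < x j)
    (hmin : MinC n x y K ν α β) :
    ∀ p ∈ K, x (n-2) < p → ν p = 0 := by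
  classical
  by_contra hcon
  push_neg at hcon
  obtain ⟨p₀, hp₀K, hp₀lt, hν₀⟩ := hcon
  have hAX : x (n-2) < x (n-1) := hs (n-2) (n-1) (by omega) (by omega)
  have hA2nn : 0 ≤ x (n-2) := by
    rcases Nat.eq_zero_or_pos (n-2) with h | h
    · rw [h]; exact hx0
    · exact le_of_lt (lt_of_le_of_lt hx0 (hs 0 (n-2) h (by omega)))
  have hg : 0 < x (n-1) - x (n-2) := by linarith
  set S : Finset ℝ := K.filter (fun p => x (n-2) < p) with hSdef
  have hS : S ⊆ K := Finset.filter_subset _ _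
  have hp₀S : p₀ ∈ S := Finset.mem_filter.mpr ⟨hp₀K, hp₀lt⟩
  set S' : Finset ℝ := S.filter (fun p => p < x (n-1)) with hS'def
  have hsub : S' ⊆ S := Finset.filter_subset _ _
  set νT : ℝ := (∑ p ∈ S', ν p * (x (n-1) - p)) / (x (n-1) - x (n-2)) with hνT
  have hνTg : νT * (x (n-1) - x (n-2)) = ∑ p ∈ S', ν p * (x (n-1) - p) := by
    rw [hνT]; field_simp
  have hval : ∀ l, l < n →
      (0:ℝ) + 0 * x l + ∑ q ∈ ({x (n-2)} : Finset ℝ), νT * max (x l - q) 0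
        = ∑ p ∈ S, ν p * max (x l - p) 0 := by
    intro l hl
    rw [Finset.sum_singleton]
    rcases Nat.lt_or_ge l (n-1) with hl1 | hl1
    · have hxl : x l ≤ x (n-2) := by
        rcases Nat.lt_or_ge l (n-2) with h | h
        · exact (hs l (n-2) h (by omega)).le
        · have : l = n-2 := by omega
          rw [this]
      rw [max_eq_right (by linarith), mul_zero]
      rw [Finset.sum_eq_zero]
      · ring
      · intro p hp
        have : x (n-2) < p := (Finset.mem_filter.mp hp).2
        rw [max_eq_right (by linarith), mul_zero]
    · have hleq : l = n-1 := by omega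
      subst hleq
      rw [max_eq_left (by linarith)]
      have hRHS : ∑ p ∈ S, ν p * max (x (n-1) - p) 0 = ∑ p ∈ S', ν p * (x (n-1) - p) := by
        have e1 : ∑ p ∈ S', ν p * (x (n-1) - p) = ∑ p ∈ S', ν p * max (x (n-1) - p) 0 := by
          apply Finset.sum_congr rfl
          intro p hp
          have : p < x (n-1) := (Finset.mem_filter.mp hp).2
          rw [max_eq_left (by linarith)]
        rw [e1]
        refine (Finset.sum_subset hsub ?_).symm
        intro p hpS hpn
        have : ¬ p < x (n-1) := by
          intro hc
          exact hpn (Finset.mem_filter.mpr ⟨hpS, hc⟩)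
        rw [max_eq_right (by linarith [not_lt.mp this]), mul_zero]
      rw [hRHS, ← hνTg]
      ring
  have hswap := swap hmin hS {x (n-2)} (fun _ => νT) 0 0 hval
  rw [Finset.sum_singleton] at hswap
  have hterm : ∀ p ∈ S', 2 * |ν p| * ((x (n-1) - p) / (x (n-1) - x (n-2)) * cc (x (n-2)))
      ≤ 2 * |ν p| * cc p := by
    intro p hp
    have hpS : p ∈ S := (Finset.mem_filter.mp hp).1
    have hA2p : x (n-2) < p := (Finset.mem_filter.mp hpS).2
    have hpX : p < x (n-1) := (Finset.mem_filter.mp hp).2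
    have hratio : (x (n-1) - p) / (x (n-1) - x (n-2)) * cc (x (n-2)) ≤ cc p := by
      rw [div_mul_eq_mul_div, div_le_iff₀ hg]
      nlinarith [cc_ratio' hA2nn hA2p hpX]
    apply mul_le_mul_of_nonneg_left hratio (by positivity)
  have hνTbound : 2 * |νT| * cc (x (n-2))
      ≤ ∑ p ∈ S', 2 * |ν p| * ((x (n-1) - p) / (x (n-1) - x (n-2)) * cc (x (n-2))) := by
    have habs : |νT| ≤ ∑ p ∈ S', |ν p| * ((x (n-1) - p) / (x (n-1) - x (n-2))) := by
      rw [hνT, abs_div, abs_of_pos hg, div_le_iff₀ hg]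
      rw [Finset.sum_mul]
      refine (Finset.abs_sum_le_sum_abs _ _).trans (Finset.sum_le_sum ?_)
      intro p hp
      have hpX : p < x (n-1) := (Finset.mem_filter.mp hp).2
      rw [abs_mul, abs_of_pos (by linarith : (0:ℝ) < x (n-1) - p)]
      have he : |ν p| * ((x (n-1) - p) / (x (n-1) - x (n-2))) * (x (n-1) - x (n-2))
          = |ν p| * (x (n-1) - p) := by field_simp
      rw [he]
    calc 2 * |νT| * cc (x (n-2))
        ≤ 2 * (∑ p ∈ S', |ν p| * ((x (n-1) - p) / (x (n-1) - x (n-2)))) * cc (x (n-2)) := by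
          have := cc_pos (x (n-2))
          nlinarith [abs_nonneg νT]
      _ = ∑ p ∈ S', 2 * |ν p| * ((x (n-1) - p) / (x (n-1) - x (n-2)) * cc (x (n-2))) := by
          rw [Finset.mul_sum, Finset.sum_mul]
          apply Finset.sum_congr rfl
          intro p _; ring
  have hstrict : ∑ p ∈ S', 2 * |ν p| * cc p < ∑ p ∈ S, 2 * |ν p| * cc p
      ∨ (∑ p ∈ S', 2 * |ν p| * ((x (n-1) - p) / (x (n-1) - x (n-2)) * cc (x (n-2)))
          < ∑ p ∈ S', 2 * |ν p| * cc p) := by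
    by_cases hp₀' : p₀ ∈ S'
    · right
      refine Finset.sum_lt_sum hterm ⟨p₀, hp₀', ?_⟩
      have hA2p : x (n-2) < p₀ := (Finset.mem_filter.mp hp₀S).2
      have hpX : p₀ < x (n-1) := (Finset.mem_filter.mp hp₀').2
      have hratio : (x (n-1) - p₀) / (x (n-1) - x (n-2)) * cc (x (n-2)) < cc p₀ := by
        rw [div_mul_eq_mul_div, div_lt_iff₀ hg]
        nlinarith [cc_ratio' hA2nn hA2p hpX]
      have : 0 < |ν p₀| := abs_pos.mpr hν₀
      nlinarith
    · left
      apply Finset.sum_lt_sum_of_subset hsub hp₀S hp₀'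
      · have : 0 < |ν p₀| := abs_pos.mpr hν₀
        nlinarith [cc_pos p₀]
      · intro j _ _
        exact mul_nonneg (by positivity) (cc_pos j).le
  have hFG : ∑ p ∈ S', 2 * |ν p| * ((x (n-1) - p) / (x (n-1) - x (n-2)) * cc (x (n-2)))
      ≤ ∑ p ∈ S', 2 * |ν p| * cc p := Finset.sum_le_sum hterm
  have hS'S : ∑ p ∈ S', 2 * |ν p| * cc p ≤ ∑ p ∈ S, 2 * |ν p| * cc p := by
    apply Finset.sum_le_sum_of_subset_of_nonneg hsub
    intro j _ _
    exact mul_nonneg (by positivity) (cc_pos j).le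
  rcases hstrict with hlt | hlt
  · linarith
  · linarith


section arith

lemma arith1 {A ε u u' xi : ℝ} (hε : 0 < ε) (hAe : 0 < A - ε)
    (h : (A - ε) * (xi - u') = A * (xi - u)) (hu : u < xi) : u' < u := by
  have h1 : (A - ε) * (u - u') = ε * (xi - u) := by linear_combination h
  have h2 : 0 < (A - ε) * (u - u') := by
    rw [h1]; exact mul_pos hε (by linarith)
  nlinarith [h2, hAe]

lemma arith2 {A ε u u' xi xm : ℝ} (hAe : 0 < A - ε)
    (h : (A - ε) * (xi - u') = A * (xi - u))
    (hε1 : ε * (xi - xm) ≤ A * (u - xm)) : xm ≤ u' := by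
  have h3 : (A - ε) * (xi - u') ≤ (A - ε) * (xi - xm) := by
    rw [h]; nlinarith [hε1]
  have := (mul_le_mul_iff_right₀ hAe).mp h3
  linarith

lemma arith3 {B ε v v' xi xip : ℝ} (hεpos : 0 < ε) (hεB : 2*ε ≤ B) (hBe : 0 < B - ε)
    (hv'd : (B - ε) * (v' - v) = ε * (v - xi))
    (hε4 : ε * (2*((v - xi) + 1)) ≤ B * (xip - v)) (hv1 : xi ≤ v) (hv2 : v < xip) :
    v' ≤ xip := by
  have m1 : B * (xip - v) ≤ (2*(B - ε)) * (xip - v) :=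
    mul_le_mul_of_nonneg_right (by linarith) (by linarith)
  have m2 : ε * (v - xi) ≤ (B - ε) * (xip - v) := by nlinarith [hε4, m1, hεpos]
  have h3 : (B - ε) * (v' - v) ≤ (B - ε) * (xip - v) := by rw [hv'd]; exact m2
  have := (mul_le_mul_iff_right₀ hBe).mp h3
  linarith

lemma arith4 {B ε v v' : ℝ} (hεpos : 0 < ε) (hBe : 0 < B - ε)
    (hv'd : (B - ε) * (v' - v) = ε * (v - xi)) (hv1 : xi ≤ v) : v ≤ v' := by
  have h2 : (B - ε) * 0 ≤ (B - ε) * (v' - v) := by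
    rw [hv'd, mul_zero]; exact mul_nonneg hεpos.le (by linarith)
  have := (mul_le_mul_iff_right₀ hBe).mp h2
  linarith

set_option maxHeartbeats 800000 in
/-- the key strict cost comparison of the rotation exchange -/
lemma arith_cost {A B ε v v' xi cu cu' cv cv' : ℝ}
    (hεpos : 0 < ε) (hAe : 0 < A - ε) (hBe : 0 < B - ε) (hBpos : 0 < B)
    (hxi : 0 < xi) (hv1 : xi ≤ v) (hvv' : v ≤ v') (hv'nn : 0 ≤ v')
    (hcv : 0 < cv) (hcv' : 0 < cv') (hcu : 1 ≤ cu) (hcu' : 0 < cu')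
    (hc1 : cu' ≤ cu) (hkey : 1 + v * v' ≤ cv * cv') (hcvle : cv ≤ cv')
    (hsq' : cv' ^ 2 = 1 + v'^2) (hvlt : v' < cv') (hcvv : 0 < cv + v)
    (hv'd : (B - ε) * (v' - v) = ε * (v - xi)) (hε3 : ε * (1 + cv + v) ≤ B)
    (hsqv : cv ^ 2 = 1 + v^2) :
    2*(A - ε)*cu' + 2*(B - ε)*cv' < 2*A*cu + 2*B*cv := by
  have hvnn : 0 ≤ v := le_trans hxi.le hv1
  have hccvv : 0 < 1 + cv + v := by linarith
  have g2 : v * (1 + cv + v) ≤ (cv + 1) * (cv + v) := by nlinarith [hsqv, hcv]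
  have l1 : (B - ε) * cv' ^ 2 = (B - ε) * (1 + v'^2) := by rw [hsq']
  have g1 : v' * (cv + 1) < cv' * (cu + cv') := by
    have h1 : v' * (cv + 1) ≤ v' * (cv' + cu) :=
      mul_le_mul_of_nonneg_left (by linarith) hv'nn
    have h2 : v' * (cv' + cu) < cv' * (cv' + cu) :=
      mul_lt_mul_of_pos_right hvlt (by linarith)
    calc v' * (cv + 1) ≤ v' * (cv' + cu) := h1
      _ < cv' * (cv' + cu) := h2
      _ = cv' * (cu + cv') := by ring
  have g3 : v' * v * (1 + cv + v) < (cv + v) * (cv' * (cu + cv')) := by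
    calc v' * v * (1 + cv + v) = v' * (v * (1 + cv + v)) := by ring
      _ ≤ v' * ((cv + 1) * (cv + v)) := mul_le_mul_of_nonneg_left g2 hv'nn
      _ = (v' * (cv + 1)) * (cv + v) := by ring
      _ < (cv' * (cu + cv')) * (cv + v) := mul_lt_mul_of_pos_right g1 hcvv
      _ = (cv + v) * (cv' * (cu + cv')) := by ring
  have g4 : B * (cv + v) ≤ (B - ε) * (1 + cv + v) := by nlinarith [hε3]
  have g8 : B * (v' * v) < (B - ε) * (cv' * (cu + cv')) := by
    have hXnn : (0:ℝ) ≤ cv' * (cu + cv') := by positivity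
    have g6 : B * (v' * v * (1 + cv + v)) < B * ((cv + v) * (cv' * (cu + cv'))) :=
      mul_lt_mul_of_pos_left g3 hBpos
    have g7 : B * ((cv + v) * (cv' * (cu + cv')))
        ≤ ((B - ε) * (1 + cv + v)) * (cv' * (cu + cv')) := by
      calc B * ((cv + v) * (cv' * (cu + cv'))) = (B * (cv + v)) * (cv' * (cu + cv')) := by ring
        _ ≤ ((B - ε) * (1 + cv + v)) * (cv' * (cu + cv')) :=
            mul_le_mul_of_nonneg_right g4 hXnn
    have g7' : (B * (v' * v)) * (1 + cv + v)
        < ((B - ε) * (cv' * (cu + cv'))) * (1 + cv + v) := by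
      calc (B * (v' * v)) * (1 + cv + v) = B * (v' * v * (1 + cv + v)) := by ring
        _ < B * ((cv + v) * (cv' * (cu + cv'))) := g6
        _ ≤ ((B - ε) * (1 + cv + v)) * (cv' * (cu + cv')) := g7
        _ = ((B - ε) * (cv' * (cu + cv'))) * (1 + cv + v) := by ring
    exact lt_of_mul_lt_mul_right g7' hccvv.le
  have h2cc : cv' * (cu + cv') = cu * cv' + 1 + v'^2 := by linear_combination hsq'
  have g9 : B * v' * (v - xi) < (B - ε) * (cu * cv' + 1 + v'^2) := by
    have hBv' : 0 ≤ B * v' := mul_nonneg hBpos.le hv'nn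
    have h1 : B * v' * (v - xi) ≤ B * (v' * v) := by
      nlinarith [mul_nonneg hBv' hxi.le]
    nlinarith [g8, h1, l1]
  have t2' : ((B - ε) * cv' - B * cv) * cv' ≤ B * v' * (v' - v) - ε * (1 + v'^2) := by
    have h1 : B * (1 + v * v') ≤ B * (cv * cv') := mul_le_mul_of_nonneg_left hkey hBpos.le
    have expand : ((B - ε) * cv' - B * cv) * cv' = (B - ε) * cv' ^ 2 - B * (cv * cv') := by
      ring
    rw [expand, l1]
    nlinarith [h1]
  have h9 : (B - ε) * cv' - B * cv < ε * cu := by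
    have hXpos : 0 < cv' * (B - ε) := mul_pos hcv' hBe
    have t2'' : (((B - ε) * cv' - B * cv) * cv') * (B - ε)
        ≤ (B * v' * (v' - v) - ε * (1 + v'^2)) * (B - ε) :=
      mul_le_mul_of_nonneg_right t2' hBe.le
    have e1 : (B * v' * (v' - v)) * (B - ε) = ε * (B * v' * (v - xi)) := by
      linear_combination (B * v') * hv'd
    have e2 : ε * (B * v' * (v - xi)) < ε * ((B - ε) * (cu * cv' + 1 + v'^2)) :=
      mul_lt_mul_of_pos_left g9 hεpos
    have hchain : (((B - ε) * cv' - B * cv)) * (cv' * (B - ε))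
        < (ε * cu) * (cv' * (B - ε)) := by nlinarith [t2'', e1, e2]
    exact lt_of_mul_lt_mul_right hchain hXpos.le
  have h1 : cu' * (2 * (A - ε)) ≤ cu * (2 * (A - ε)) :=
    mul_le_mul_of_nonneg_right hc1 (by linarith)
  nlinarith [h1, h9, hεpos]

end arith

set_option maxHeartbeats 1000000 in
/-- In a canonical minimizer, an upward kink strictly inside `(x (i-1), x i)` cannot coexist
with a downward kink in `[x i, x (i+1))`. -/
lemma T3down {n : ℕ} {x y : ℕ → ℝ} {K : Finset ℝ} {ν : ℝ → ℝ} {α β : ℝ}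
    (hx0 : 0 ≤ x 0) (hs : ∀ i j, i < j → j < n → x i < x j)
    (hmin : MinC n x y K ν α β) {i : ℕ} (hi1 : 1 ≤ i) (hi2 : i + 1 < n)
    {u v : ℝ} (huK : u ∈ K) (hvK : v ∈ K)
    (hu1 : x (i-1) < u) (hu2 : u < x i) (hv1 : x i ≤ v) (hv2 : v < x (i+1))
    (hνu : 0 < ν u) (hνv : ν v < 0) : False := by
  classical
  set A : ℝ := ν u with hA
  set B : ℝ := -ν v with hB
  have hBpos : 0 < B := by simp only [hB]; linarith
  have hxm1nn : 0 ≤ x (i-1) := by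
    rcases Nat.eq_zero_or_pos (i-1) with h | h
    · rw [h]; exact hx0
    · exact le_of_lt (lt_of_le_of_lt hx0 (hs 0 (i-1) h (by omega)))
  have hxinn : 0 < x i := lt_of_le_of_lt hxm1nn (lt_trans hu1 hu2)
  have hvnn : 0 ≤ v := le_trans hxinn.le hv1
  have hgap : 0 < x i - x (i-1) := by linarith
  have hccv := cc_pos v
  have hccvv : 0 < 1 + cc v + v := by linarith [abs_lt_cc v, neg_abs_le v]
  -- choose ε > 0 small enough
  obtain ⟨ε, hεpos, hεA, hε2B, hεe₁', hεe₃', hεe₄'⟩ :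
      ∃ ε : ℝ, 0 < ε ∧ ε < A ∧ 2*ε ≤ B ∧ ε * (x i - x (i-1)) ≤ A * (u - x (i-1)) ∧
        ε * (1 + cc v + v) ≤ B ∧ ε * (2*((v - x i) + 1)) ≤ B * (x (i+1) - v) := by
    set e₁ : ℝ := A * (u - x (i-1)) / (x i - x (i-1)) with he₁
    set e₂ : ℝ := B / 2 with he₂
    set e₃ : ℝ := B / (1 + cc v + v) with he₃
    set e₄ : ℝ := B * (x (i+1) - v) / (2*((v - x i) + 1)) with he₄
    have hden4 : (0:ℝ) < 2*((v - x i) + 1) := by linarith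
    have he₁pos : 0 < e₁ := div_pos (mul_pos hνu (by linarith)) hgap
    have he₂pos : 0 < e₂ := by rw [he₂]; linarith
    have he₃pos : 0 < e₃ := div_pos hBpos hccvv
    have he₄pos : 0 < e₄ := div_pos (mul_pos hBpos (by linarith)) hden4
    refine ⟨min (min e₁ e₂) (min e₃ e₄),
      lt_min (lt_min he₁pos he₂pos) (lt_min he₃pos he₄pos), ?_, ?_, ?_, ?_, ?_⟩
    · have h1 : e₁ < A := by
        rw [he₁, div_lt_iff₀ hgap]
        have : A * (u - x (i-1)) < A * (x i - x (i-1)) :=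
          mul_lt_mul_of_pos_left (by linarith) hνu
        linarith
      calc min (min e₁ e₂) (min e₃ e₄) ≤ e₁ := (min_le_left _ _).trans (min_le_left _ _)
        _ < A := h1
    · have h1 : min (min e₁ e₂) (min e₃ e₄) ≤ e₂ := (min_le_left _ _).trans (min_le_right _ _)
      rw [he₂] at h1; linarith
    · have h1 : min (min e₁ e₂) (min e₃ e₄) ≤ e₁ := (min_le_left _ _).trans (min_le_left _ _)
      calc min (min e₁ e₂) (min e₃ e₄) * (x i - x (i-1)) ≤ e₁ * (x i - x (i-1)) :=
            mul_le_mul_of_nonneg_right h1 hgap.le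
        _ = A * (u - x (i-1)) := by rw [he₁]; field_simp
    · have h1 : min (min e₁ e₂) (min e₃ e₄) ≤ e₃ := (min_le_right _ _).trans (min_le_left _ _)
      calc min (min e₁ e₂) (min e₃ e₄) * (1 + cc v + v) ≤ e₃ * (1 + cc v + v) :=
            mul_le_mul_of_nonneg_right h1 hccvv.le
        _ = B := by rw [he₃]; field_simp
    · have h1 : min (min e₁ e₂) (min e₃ e₄) ≤ e₄ := (min_le_right _ _).trans (min_le_right _ _)
      calc min (min e₁ e₂) (min e₃ e₄) * (2*((v - x i) + 1)) ≤ e₄ * (2*((v - x i) + 1)) :=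
            mul_le_mul_of_nonneg_right h1 hden4.le
        _ = B * (x (i+1) - v) := by rw [he₄]; field_simp; exact mul_div_cancel_right₀ _ (by linarith)
  have hεB : ε < B := by linarith
  have hAe : 0 < A - ε := by linarith
  have hBe : 0 < B - ε := by linarith
  -- the new kink positions
  set u' : ℝ := x i - A * (x i - u) / (A - ε) with hu'def
  set v' : ℝ := (B * v - ε * x i) / (B - ε) with hv'def
  have hu'l : (A - ε) * (x i - u') = A * (x i - u) := by
    rw [hu'def]; field_simp; ring
  have hv'l : (B - ε) * v' = B * v - ε * x i := by
    rw [hv'def]; field_simp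
  clear_value u' v'
  clear hu'def hv'def
  have hv'd : (B - ε) * (v' - v) = ε * (v - x i) := by linear_combination hv'l
  have hu'lt : u' < u := arith1 hεpos hAe hu'l hu2
  have hu'ge : x (i-1) ≤ u' := arith2 hAe hu'l hεe₁'
  have hu'nn : 0 ≤ u' := le_trans hxm1nn hu'ge
  have hv'ge : v ≤ v' := arith4 hεpos hBe hv'd hv1
  have hv'nn : 0 ≤ v' := le_trans hvnn hv'ge
  have hv'le : v' ≤ x (i+1) := arith3 hεpos hε2B hBe hv'd hεe₄' hv1 hv2
  have huv : u ≠ v := by intro h; rw [h] at hu2; linarith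
  have hu'v' : u' ≠ v' := by
    intro h
    have : v' < u := h ▸ hu'lt
    linarith [hv'ge]
  have hSK : ({u, v} : Finset ℝ) ⊆ K := by
    intro q hq
    rcases Finset.mem_insert.mp hq with h | h
    · rw [h]; exact huK
    · rw [Finset.mem_singleton.mp h]; exact hvK
  set ν' : ℝ → ℝ := fun q => if q = u' then A - ε else ν v + ε with hν'
  have hν'u' : ν' u' = A - ε := by rw [hν']; simp
  have hν'v' : ν' v' = ν v + ε := by rw [hν']; simp [hu'v'.symm]
  have hval : ∀ l, l < n →
      (0:ℝ) + 0 * x l + ∑ q ∈ ({u', v'} : Finset ℝ), ν' q * max (x l - q) 0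
        = ∑ p ∈ ({u, v} : Finset ℝ), ν p * max (x l - p) 0 := by
    intro l hl
    rw [Finset.sum_pair hu'v', Finset.sum_pair huv, hν'u', hν'v']
    rcases lt_trichotomy l i with hli | hli | hli
    · have hxl : x l ≤ x (i-1) := by
        rcases Nat.lt_or_ge l (i-1) with h | h
        · exact (hs l (i-1) h (by omega)).le
        · have : l = i-1 := by omega
          rw [this]
      rw [max_eq_right (by linarith), max_eq_right (by linarith),
        max_eq_right (by linarith), max_eq_right (by linarith)]
      ring
    · subst hli
      rw [max_eq_left (by linarith : (0:ℝ) ≤ x l - u'),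
        max_eq_right (by linarith [hv'ge] : x l - v' ≤ (0:ℝ)),
        max_eq_left (by linarith : (0:ℝ) ≤ x l - u),
        max_eq_right (by linarith : x l - v ≤ (0:ℝ))]
      rw [mul_zero, mul_zero, add_zero, add_zero]
      linarith [hu'l]
    · have hxl : x (i+1) ≤ x l := by
        rcases Nat.lt_or_ge (i+1) l with h | h
        · exact (hs (i+1) l h hl).le
        · have : l = i+1 := by omega
          rw [this]
      have hv'e : (ν v + ε) * v' = ν v * v + ε * x i := by
        have hveq : ν v = -B := by rw [hB]; ring
        rw [hveq]
        linear_combination (-1) * hv'l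
      rw [max_eq_left (by linarith : (0:ℝ) ≤ x l - u'),
        max_eq_left (by linarith [hv'le] : (0:ℝ) ≤ x l - v'),
        max_eq_left (by linarith : (0:ℝ) ≤ x l - u),
        max_eq_left (by linarith : (0:ℝ) ≤ x l - v)]
      linear_combination hu'l - hv'e
  have hswap := swap hmin hSK {u', v'} ν' 0 0 hval
  rw [Finset.sum_pair hu'v', Finset.sum_pair huv, hν'u', hν'v'] at hswap
  have habsu : |ν u| = A := abs_of_pos hνu
  have habsv : |ν v| = B := by rw [hB]; exact abs_of_neg hνv
  have habsu' : |A - ε| = A - ε := abs_of_pos hAe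
  have habsv' : |ν v + ε| = B - ε := by
    rw [show ν v + ε = -(B - ε) by rw [hB]; ring, abs_neg]
    exact abs_of_pos hBe
  rw [habsu, habsv, habsu', habsv'] at hswap
  -- now derive the strict reverse inequality
  have hcvv : 0 < cc v + v := by linarith [abs_lt_cc v, neg_abs_le v]
  have hfinal : 2*(A - ε)*cc u' + 2*(B - ε)*cc v' < 2*A*cc u + 2*B*cc v :=
    arith_cost hεpos hAe hBe hBpos hxinn hv1 (arith4 hεpos hBe hv'd hv1)
      (le_trans hvnn (arith4 hεpos hBe hv'd hv1)) (cc_pos v) (cc_pos v') (one_le_cc u)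
      (cc_pos u') (cc_le_cc hu'nn hu'lt.le) (cc_key v v')
      (cc_le_cc hvnn hv'ge) (cc_sq v') (self_lt_cc v') hcvv hv'd hεe₃' (cc_sq v)
  linarith [hswap, hfinal]

lemma slopeL_formula (K : Finset ℝ) (ν : ℝ → ℝ) (α β : ℝ) {t' t : ℝ} (h : t' < t) :
    ev K ν α β t - ev K ν α β t' =
      slopeL K ν β t * (t - t') -
        ∑ p ∈ K.filter (fun p => t' < p ∧ p < t), ν p * (p - t') := by
  rw [ev_diff K ν α β h.le, slopeL, sum_filter_le_split K ν h]
  have key : ∑ p ∈ K.filter (fun p => t' < p ∧ p < t), ν p * (t - p)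
      = (∑ p ∈ K.filter (fun p => t' < p ∧ p < t), ν p) * (t - t')
        - ∑ p ∈ K.filter (fun p => t' < p ∧ p < t), ν p * (p - t') := by
    rw [Finset.sum_mul, ← Finset.sum_sub_distrib]
    exact Finset.sum_congr rfl (fun p _ => by ring)
  rw [key]
  ring

lemma slopeR_formula (K : Finset ℝ) (ν : ℝ → ℝ) (α β : ℝ) {t' t : ℝ} (h : t' < t) :
    ev K ν α β t - ev K ν α β t' =
      (slopeL K ν β t' + (if t' ∈ K then ν t' else 0)) * (t - t') +
        ∑ p ∈ K.filter (fun p => t' < p ∧ p < t), ν p * (t - p) := by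
  rw [ev_diff K ν α β h.le, slopeL, sum_filter_le_eq K ν t']
  ring

lemma ev_neg (K : Finset ℝ) (ν : ℝ → ℝ) (α β t : ℝ) :
    ev K (fun p => -(ν p)) (-α) (-β) t = -(ev K ν α β t) := by
  simp only [ev, neg_mul, Finset.sum_neg_distrib]
  ring

lemma cost_neg (K : Finset ℝ) (ν : ℝ → ℝ) : cost K (fun p => -(ν p)) = cost K ν := by
  unfold cost
  exact Finset.sum_congr rfl (fun p _ => by rw [abs_neg])

lemma MinC_neg {n : ℕ} {x y : ℕ → ℝ} {K : Finset ℝ} {ν : ℝ → ℝ} {α β : ℝ}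
    (hmin : MinC n x y K ν α β) :
    MinC n x (fun l => -(y l)) K (fun p => -(ν p)) (-α) (-β) := by
  constructor
  · intro l hl
    rw [ev_neg, hmin.1 l hl]
  · intro K' ν' α' β' hI'
    have hI'' : InterpC n x y K' (fun p => -(ν' p)) (-α') (-β') := by
      intro l hl
      rw [ev_neg, hI' l hl]
      ring
    calc cost K (fun p => -(ν p)) = cost K ν := cost_neg K ν
      _ ≤ cost K' (fun p => -(ν' p)) := hmin.2 K' _ (-α') (-β') hI''
      _ = cost K' ν' := cost_neg K' ν'

lemma slopeL_neg (K : Finset ℝ) (ν : ℝ → ℝ) (β c : ℝ) :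
    slopeL K (fun p => -(ν p)) (-β) c = -(slopeL K ν β c) := by
  simp only [slopeL, Finset.sum_neg_distrib]
  ring

lemma pieceSlope_neg (x y : ℕ → ℝ) (i : ℕ) :
    pieceSlope x (fun l => -(y l)) i = -(pieceSlope x y i) := by
  unfold pieceSlope
  rw [show (-(y (i+1)) - -(y i)) = -(y (i+1) - y i) by ring, neg_div]

/-- upper bound on the incoming slope at an interior data point -/
lemma interior_ub {n : ℕ} {x y : ℕ → ℝ} {K : Finset ℝ} {ν : ℝ → ℝ} {α β : ℝ}
    (hx0 : 0 ≤ x 0) (hs : ∀ i j, i < j → j < n → x i < x j)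
    (hmin : MinC n x y K ν α β) {i : ℕ} (hi1 : 1 ≤ i) (hi2 : i + 1 < n) :
    slopeL K ν β (x i) ≤ max (pieceSlope x y (i-1)) (pieceSlope x y i) := by
  classical
  by_contra hcon
  push_neg at hcon
  set s : ℝ := slopeL K ν β (x i) with hsdef
  have hg1 : 0 < x i - x (i-1) := by
    have := hs (i-1) i (by omega) (by omega)
    linarith
  have hg2 : 0 < x (i+1) - x i := by
    have := hs i (i+1) (by omega) hi2
    linarith
  have hi11 : i - 1 + 1 = i := by omega
  have hd1 : pieceSlope x y (i-1) < s := lt_of_le_of_lt (le_max_left _ _) hcon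
  have hd2 : pieceSlope x y i < s := lt_of_le_of_lt (le_max_right _ _) hcon
  have hps1 : pieceSlope x y (i-1) = (y i - y (i-1)) / (x i - x (i-1)) := by
    rw [pieceSlope, hi11]
  have hy1 : y i - y (i-1) < s * (x i - x (i-1)) := by
    rw [hps1, div_lt_iff₀ hg1] at hd1
    linarith [hd1]
  have hy2 : y (i+1) - y i < s * (x (i+1) - x i) := by
    rw [pieceSlope, div_lt_iff₀ hg2] at hd2
    linarith [hd2]
  have hev1 : ev K ν α β (x i) - ev K ν α β (x (i-1)) = y i - y (i-1) := by
    rw [hmin.1 i (by omega), hmin.1 (i-1) (by omega)]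
  have hev2 : ev K ν α β (x (i+1)) - ev K ν α β (x i) = y (i+1) - y i := by
    rw [hmin.1 (i+1) hi2, hmin.1 i (by omega)]
  -- Step 1: there is an up kink strictly inside (x (i-1), x i)
  obtain ⟨u, huK, hu1, hu2, hνu⟩ :
      ∃ u, u ∈ K ∧ x (i-1) < u ∧ u < x i ∧ 0 < ν u := by
    by_contra hno
    push_neg at hno
    have hSig : ∑ p ∈ K.filter (fun p => x (i-1) < p ∧ p < x i), ν p * (p - x (i-1)) ≤ 0 := by
      apply Finset.sum_nonpos
      intro p hp
      have hpK := (Finset.mem_filter.mp hp).1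
      have hp1 := (Finset.mem_filter.mp hp).2.1
      have hp2 := (Finset.mem_filter.mp hp).2.2
      have hνp : ν p ≤ 0 := hno p hpK hp1 hp2
      exact mul_nonpos_of_nonpos_of_nonneg hνp (by linarith)
    have hform := slopeL_formula K ν α β (show x (i-1) < x i by linarith)
    rw [hev1] at hform
    have : s * (x i - x (i-1)) ≤ y i - y (i-1) := by
      rw [hform]
      linarith [hSig]
    linarith [hy1]
  -- Step 2: no down kinks in [x i, x (i+1))
  have hvge : ∀ p ∈ K, x i ≤ p → p < x (i+1) → 0 ≤ ν p := by
    intro p hpK h1 h2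
    by_contra hneg
    push_neg at hneg
    exact T3down hx0 hs hmin hi1 hi2 huK hpK hu1 hu2 h1 h2 hνu hneg
  -- Step 3: contradiction with the right secant
  have hform2 := slopeR_formula K ν α β (show x i < x (i+1) by linarith)
  rw [hev2] at hform2
  have hite : 0 ≤ (if x i ∈ K then ν (x i) else 0) := by
    split
    · rename_i h; exact hvge (x i) h (le_refl _) (by linarith)
    · exact le_refl 0
  have hSig2 : 0 ≤ ∑ p ∈ K.filter (fun p => x i < p ∧ p < x (i+1)), ν p * (x (i+1) - p) := by
    apply Finset.sum_nonneg
    intro p hp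
    have h1 := (Finset.mem_filter.mp hp).2.1
    have h2 := (Finset.mem_filter.mp hp).2.2
    exact mul_nonneg (hvge p (Finset.mem_filter.mp hp).1 h1.le h2) (by linarith)
  have : s * (x (i+1) - x i) ≤ y (i+1) - y i := by
    rw [hform2]
    have : s * (x (i+1) - x i) ≤ (s + (if x i ∈ K then ν (x i) else 0)) * (x (i+1) - x i) := by
      apply mul_le_mul_of_nonneg_right _ hg2.le
      linarith [hite]
    linarith [hSig2, this]
  linarith [hy2]

/-- the incoming slopes at the two leftmost data points equal the first secant slope -/
lemma boundary_left {n : ℕ} {x y : ℕ → ℝ} {K : Finset ℝ} {ν : ℝ → ℝ} {α β : ℝ}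
    (hn : 2 ≤ n) (hx0 : 0 ≤ x 0) (hs : ∀ i j, i < j → j < n → x i < x j)
    (hmin : MinC n x y K ν α β) :
    slopeL K ν β (x 0) = pieceSlope x y 0 ∧ slopeL K ν β (x 1) = pieceSlope x y 0 := by
  have hTL := Tleft hn hx0 hs hmin
  have h01 : x 0 < x 1 := hs 0 1 one_pos hn
  have hβ0 : slopeL K ν β (x 0) = β := by
    rw [slopeL, Finset.sum_eq_zero, add_zero]
    intro p hp
    exact hTL p (Finset.mem_filter.mp hp).1 (by linarith [(Finset.mem_filter.mp hp).2])
  have hβ1 : slopeL K ν β (x 1) = β := by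
    rw [slopeL, Finset.sum_eq_zero, add_zero]
    intro p hp
    exact hTL p (Finset.mem_filter.mp hp).1 (Finset.mem_filter.mp hp).2
  have hform := slopeL_formula K ν α β h01
  rw [hmin.1 1 (by omega), hmin.1 0 (by omega), hβ1] at hform
  have hSig : ∑ p ∈ K.filter (fun p => x 0 < p ∧ p < x 1), ν p * (p - x 0) = 0 := by
    apply Finset.sum_eq_zero
    intro p hp
    rw [hTL p (Finset.mem_filter.mp hp).1 (Finset.mem_filter.mp hp).2.2, zero_mul]
  rw [hSig, sub_zero] at hform
  have hps : pieceSlope x y 0 = β := by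
    rw [pieceSlope]
    rw [show y (0+1) = y 1 from rfl, show x (0+1) = x 1 from rfl, hform]
    exact mul_div_cancel_right₀ β (by linarith : x 1 - x 0 ≠ 0)
  exact ⟨by rw [hβ0, hps], by rw [hβ1, hps]⟩

/-- the incoming slope at the last data point equals the last secant slope -/
lemma boundary_right {n : ℕ} {x y : ℕ → ℝ} {K : Finset ℝ} {ν : ℝ → ℝ} {α β : ℝ}
    (hn : 2 ≤ n) (hx0 : 0 ≤ x 0) (hs : ∀ i j, i < j → j < n → x i < x j)
    (hmin : MinC n x y K ν α β) :
    slopeL K ν β (x (n-1)) = pieceSlope x y (n-2) := by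
  have hTR := Tright hn hx0 hs hmin
  have hAX : x (n-2) < x (n-1) := hs (n-2) (n-1) (by omega) (by omega)
  have hsplit : slopeL K ν β (x (n-1))
      = slopeL K ν β (x (n-2)) + (if x (n-2) ∈ K then ν (x (n-2)) else 0) := by
    rw [slopeL, sum_filter_le_split K ν hAX]
    have hmid0 : ∑ p ∈ K.filter (fun p => x (n-2) < p ∧ p < x (n-1)), ν p = 0 :=
      Finset.sum_eq_zero (fun p hp =>
        hTR p (Finset.mem_filter.mp hp).1 (Finset.mem_filter.mp hp).2.1)
    rw [hmid0, add_zero, sum_filter_le_eq K ν (x (n-2)), slopeL]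
    ring
  have hform := slopeR_formula K ν α β hAX
  rw [hmin.1 (n-1) (by omega), hmin.1 (n-2) (by omega)] at hform
  have hSig : ∑ p ∈ K.filter (fun p => x (n-2) < p ∧ p < x (n-1)), ν p * (x (n-1) - p) = 0 := by
    apply Finset.sum_eq_zero
    intro p hp
    rw [hTR p (Finset.mem_filter.mp hp).1 (Finset.mem_filter.mp hp).2.1, zero_mul]
  rw [hSig, add_zero] at hform
  have hn21 : n - 2 + 1 = n - 1 := by omega
  rw [pieceSlope, hn21, hform, ← hsplit]
  exact (mul_div_cancel_right₀ _ (by linarith : x (n-1) - x (n-2) ≠ 0)).symm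



/-- **Lemma (pieceSlope of the incoming piece).**  For sorted data, the pieceSlope `s*_i` of the
linear piece of the min-norm interpolator `f̂` incoming to `x i` (i.e. the left derivative
`lim_{ε→0⁺} f̂'(x i − ε)`, formalized as the derivative within `(-∞, x i)` at `x i`)
exists and lies in `[min (δ_{i-1}) (δ_i), max (δ_{i-1}) (δ_i)]`. -/
theorem min_norm_incoming_slope_bounds (n : ℕ) (hn : 2 ≤ n) (x y : ℕ → ℝ)
    (hx0 : 0 ≤ x 0) (hsorted : ∀ i j, i < j → j < n → x i < x j)
    (f : ℝ → ℝ) (hf : IsMinNormNet (fun i : Fin n => (x i, y i)) f) :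
    ∀ i, i < n →
      ∃ s : ℝ, HasDerivWithinAt f s (Set.Iio (x i)) (x i) ∧
        min (slopeExt n x y (i - 1)) (slopeExt n x y i) ≤ s ∧
        s ≤ max (slopeExt n x y (i - 1)) (slopeExt n x y i) := by

  obtain ⟨K, ν, α, β, hfev, hmin⟩ := extract hf
  intro i hi
  refine ⟨slopeL K ν β (x i), by rw [hfev]; exact ev_hasDerivWithinAt K ν α β (x i), ?_, ?_⟩
  · -- lower bound
    by_cases h0 : i = 0
    · subst h0
      have hbl := (boundary_left hn hx0 hsorted hmin).1
      have he : slopeExt n x y 0 = pieceSlope x y 0 := by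
        rw [slopeExt, if_pos (by omega : 0 + 1 < n)]
      rw [show (0:ℕ) - 1 = 0 from rfl, he, min_self, hbl]
    · by_cases h1 : i + 1 < n
      · have hi1 : 1 ≤ i := by omega
        have he1 : slopeExt n x y (i-1) = pieceSlope x y (i-1) := by
          rw [slopeExt, if_pos (by omega : i - 1 + 1 < n)]
        have he2 : slopeExt n x y i = pieceSlope x y i := by
          rw [slopeExt, if_pos h1]
        rw [he1, he2]
        have hub' := interior_ub hx0 hsorted (MinC_neg hmin) hi1 h1
        rw [slopeL_neg, pieceSlope_neg, pieceSlope_neg, max_neg_neg] at hub'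
        linarith [hub']
      · have hieq : i = n - 1 := by omega
        subst hieq
        have hbr := boundary_right hn hx0 hsorted hmin
        have he1 : slopeExt n x y (n-1-1) = pieceSlope x y (n-2) := by
          rw [slopeExt, if_pos (by omega : n - 1 - 1 + 1 < n), show n-1-1 = n-2 by omega]
        have he2 : slopeExt n x y (n-1) = pieceSlope x y (n-2) := by
          rw [slopeExt, if_neg (by omega : ¬ (n - 1 + 1 < n))]
        rw [he1, he2, min_self, hbr]
  · -- upper bound
    by_cases h0 : i = 0
    · subst h0
      have hbl := (boundary_left hn hx0 hsorted hmin).1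
      have he : slopeExt n x y 0 = pieceSlope x y 0 := by
        rw [slopeExt, if_pos (by omega : 0 + 1 < n)]
      rw [show (0:ℕ) - 1 = 0 from rfl, he, max_self, hbl]
    · by_cases h1 : i + 1 < n
      · have hi1 : 1 ≤ i := by omega
        have he1 : slopeExt n x y (i-1) = pieceSlope x y (i-1) := by
          rw [slopeExt, if_pos (by omega : i - 1 + 1 < n)]
        have he2 : slopeExt n x y i = pieceSlope x y i := by
          rw [slopeExt, if_pos h1]
        rw [he1, he2]
        exact interior_ub hx0 hsorted hmin hi1 h1
      · have hieq : i = n - 1 := by omega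
        subst hieq
        have hbr := boundary_right hn hx0 hsorted hmin
        have he1 : slopeExt n x y (n-1-1) = pieceSlope x y (n-2) := by
          rw [slopeExt, if_pos (by omega : n - 1 - 1 + 1 < n), show n-1-1 = n-2 by omega]
        have he2 : slopeExt n x y (n-1) = pieceSlope x y (n-2) := by
          rw [slopeExt, if_neg (by omega : ¬ (n - 1 + 1 < n))]
        rw [he1, he2, max_self, hbr]


end
end

section
/- Let 0 ≤ x₁ < ... < xₙ with labels y₁,...,yₙ, let f̂ be the minimum-norm interpolating two-layer ReLU network with skip connection, and let f*: ℝ → ℝ be any function. Then for every i ∈ {2,...,n−2} and every x ∈ [x_i, x_{i+1}): |f̂(x) − f*(x)| ≤ max{ |g_i(x) − f*(x)|, min{ |g_{i+1}(x) − f*(x)|, |g_{i−1}(x) − f*(x)| } }; moreover |f̂(x) − f*(x)| = |g₁(x) − f*(x)| for x ∈ [0, x₂) and |f̂(x) − f*(x)| = |g_{n−1}(x) − f*(x)| for x ∈ [x_{n−1}, 1]. -/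
open scoped ENNReal NNReal

noncomputable section

/-- The affine function `g_i` through `(x₁,y₁)` and `(x₂,y₂)`. -/
def affThrough (x₁ y₁ x₂ y₂ : ℝ) : ℝ → ℝ :=
  fun t => y₁ + (y₂ - y₁) / (x₂ - x₁) * (t - x₁)

/-- The sign of the discrete curvature at the (0-indexed) data point `i`:
`+1` if `δ_i > δ_{i-1}`, `-1` if `δ_i < δ_{i-1}`, and `0` if they are equal. -/
def curv (n : ℕ) (x y : ℕ → ℝ) (i : ℕ) : ℤ :=
  if slopeExt n x y (i - 1) < slopeExt n x y i then 1
  else if slopeExt n x y i < slopeExt n x y (i - 1) then -1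
  else 0

/-- The affine piece `g_i` of the data (0-indexed). -/
def gPiece (x y : ℕ → ℝ) (i : ℕ) : ℝ → ℝ :=
  affThrough (x i) (y i) (x (i + 1)) (y (i + 1))

set_option maxHeartbeats 1000000

namespace MinNormAux


/-- weight of a kink at position `s` -/
def om (s : ℝ) : ℝ := Real.sqrt (1 + s ^ 2)

lemma om_pos (s : ℝ) : 0 < om s := Real.sqrt_pos.2 (by positivity)

lemma om_sq (s : ℝ) : om s ^ 2 = 1 + s ^ 2 := Real.sq_sqrt (by positivity)

lemma abs_lt_om (s : ℝ) : |s| < om s := by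
  have h1 : om s ^ 2 = 1 + s ^ 2 := om_sq s
  have h2 : (0:ℝ) < om s := om_pos s
  nlinarith [abs_nonneg s, sq_abs s]

lemma om_lip (u v : ℝ) : om u ≤ om v + |u - v| := by
  have h1 := om_sq u
  have h2 := om_sq v
  have h3 := om_pos u
  have h4 := om_pos v
  have h5 := abs_lt_om v
  have h6 : |u - v| ^ 2 = (u - v) ^ 2 := sq_abs _
  have h7 := abs_nonneg (u - v)
  have h8 : u * v ≤ |v| * |u - v| + v ^ 2 := by
    have : v * (u - v) ≤ |v| * |u - v| := by
      calc v * (u - v) ≤ |v * (u - v)| := le_abs_self _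
      _ = |v| * |u - v| := abs_mul _ _
    nlinarith
  nlinarith [sq_nonneg (om u - om v - |u - v|), sq_nonneg (om u + om v + |u - v|)]

lemma om_cauchy (u v : ℝ) : 1 + u * v ≤ om u * om v := by
  have h3 := om_pos u
  have h4 := om_pos v
  have h5 : (om u * om v) ^ 2 = (1 + u ^ 2) * (1 + v ^ 2) := by
    rw [mul_pow, om_sq, om_sq]
  rcases le_or_gt (1 + u * v) 0 with h | h
  · nlinarith
  · nlinarith [sq_nonneg (u - v), mul_pos h3 h4]

lemma om_mono {u v : ℝ} (hu : 0 ≤ u) (huv : u ≤ v) : om u ≤ om v :=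
  Real.sqrt_le_sqrt (by nlinarith)

/-- kink-form function -/
def kfun (m : ℕ) (D S : Fin m → ℝ) (A B : ℝ) : ℝ → ℝ :=
  fun t => (∑ j, D j * max (t - S j) 0) + A * t + B

/-- cost of a kink configuration -/
def kcost (m : ℕ) (D S : Fin m → ℝ) : ℝ := ∑ j, 2 * |D j| * om (S j)

lemma sum_diff_two {m : ℕ} (F G : Fin m → ℝ) (j0 j1 : Fin m) (hne : j0 ≠ j1)
    (h : ∀ j, j ≠ j0 → j ≠ j1 → F j = G j) :
    ∑ j, F j = ∑ j, G j + (F j0 - G j0) + (F j1 - G j1) := by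
  have key : ∑ j ∈ ({j0, j1} : Finset (Fin m)), (F j - G j) = ∑ j, (F j - G j) := by
    apply Finset.sum_subset (Finset.subset_univ _)
    intro j _ hj
    simp only [Finset.mem_insert, Finset.mem_singleton, not_or] at hj
    rw [h j hj.1 hj.2]; ring
  rw [Finset.sum_pair hne] at key
  have : ∑ j, (F j - G j) = ∑ j, F j - ∑ j, G j := Finset.sum_sub_distrib _ _
  rw [this] at key
  linarith

lemma sum_diff_one {m : ℕ} (F G : Fin m → ℝ) (j0 : Fin m)
    (h : ∀ j, j ≠ j0 → F j = G j) :
    ∑ j, F j = ∑ j, G j + (F j0 - G j0) := by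
  have key : ∑ j ∈ ({j0} : Finset (Fin m)), (F j - G j) = ∑ j, (F j - G j) := by
    apply Finset.sum_subset (Finset.subset_univ _)
    intro j _ hj
    simp only [Finset.mem_singleton] at hj
    rw [h j hj]; ring
  rw [Finset.sum_singleton] at key
  have : ∑ j, (F j - G j) = ∑ j, F j - ∑ j, G j := Finset.sum_sub_distrib _ _
  rw [this] at key
  linarith


lemma relu_neg (u : ℝ) : max (-u) 0 = max u 0 - u := by
  rcases le_total u 0 with h | h
  · rw [max_eq_left (by linarith), max_eq_right h]; ring
  · rw [max_eq_right (by linarith), max_eq_left h]; ring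

lemma mul_relu (c u : ℝ) (hc : 0 ≤ c) : c * max u 0 = max (c * u) 0 := by
  rcases le_total u 0 with h | h
  · rw [max_eq_right h, max_eq_right (by nlinarith), mul_zero]
  · rw [max_eq_left h, max_eq_left (by positivity)]

/-- per-neuron decomposition into kink form -/
lemma net_term_eq (a w b t : ℝ) :
    a * max (w * t + b) 0 =
      (a * |w|) * max (t - (if w = 0 then 0 else -b / w)) 0
      + (if w < 0 then a * w else 0) * t
      + (if w < 0 then a * b else if w = 0 then a * max b 0 else 0) := by
  rcases lt_trichotomy w 0 with hw | hw | hw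
  · have hw' : w ≠ 0 := ne_of_lt hw
    simp only [if_neg hw', if_pos hw, abs_of_neg hw]
    have h1 : -w * max (t - -b / w) 0 = max (-w * (t - -b / w)) 0 := mul_relu _ _ (by linarith)
    have h2 : -w * (t - -b / w) = -(w * t + b) := by field_simp; ring
    rw [mul_assoc, h1, h2, relu_neg]
    ring
  · subst hw; simp
  · have hw' : w ≠ 0 := ne_of_gt hw
    simp only [if_neg hw', if_neg (not_lt.2 (le_of_lt hw)), abs_of_pos hw]
    have h1 : w * max (t - -b / w) 0 = max (w * (t - -b / w)) 0 := mul_relu _ _ (le_of_lt hw)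
    have h2 : w * (t - -b / w) = w * t + b := by field_simp; ring
    rw [mul_assoc, h1, h2]
    ring

/-- per-neuron cost lower bound -/
lemma net_term_cost (a w b : ℝ) :
    2 * (|a| * |w|) * om (if w = 0 then 0 else -b / w) ≤ a ^ 2 + w ^ 2 + b ^ 2 := by
  rcases eq_or_ne w 0 with hw | hw
  · subst hw; simp; positivity
  · simp only [if_neg hw]
    set s := -b / w with hs
    have hw2 : (0:ℝ) < w ^ 2 := by positivity
    have hss : w ^ 2 * s ^ 2 = b ^ 2 := by rw [hs]; field_simp
    have h1 := om_sq s
    have h2 := om_pos s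
    nlinarith [sq_nonneg (|a| - |w| * om s), sq_abs a, sq_abs w, abs_nonneg a, abs_nonneg w,
      mul_nonneg (abs_nonneg a) (abs_nonneg w)]

/-- realize a kink configuration as a network, exactly at balanced cost -/
lemma kink_to_net (m : ℕ) (D S : Fin m → ℝ) (A B : ℝ) :
    ∃ (a w b : Fin m → ℝ) (a₀ b₀ : ℝ),
      (∀ t, netFun m a w b a₀ b₀ t = kfun m D S A B t) ∧ normSq m a w b = kcost m D S := by
  classical
  refine ⟨fun j => if D j = 0 then 0 else D j / Real.sqrt (|D j| / om (S j)),
    fun j => if D j = 0 then 0 else Real.sqrt (|D j| / om (S j)),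
    fun j => if D j = 0 then 0 else -Real.sqrt (|D j| / om (S j)) * S j, A, B, ?_, ?_⟩
  · intro t
    unfold netFun kfun
    congr 1
    congr 1
    apply Finset.sum_congr rfl
    intro j _
    rcases eq_or_ne (D j) 0 with hD | hD
    · simp [hD]
    · simp only [if_neg hD]
      set o := om (S j) with ho
      have hop : 0 < o := om_pos _
      have hq : (0:ℝ) < |D j| / o := by
        have : 0 < |D j| := abs_pos.2 hD
        positivity
      set w := Real.sqrt (|D j| / o) with hwdef
      have hwp : 0 < w := Real.sqrt_pos.2 hq
      have h1 : w * t + -w * S j = w * (t - S j) := by ring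
      rw [h1, ← mul_relu w _ (le_of_lt hwp), ← mul_assoc 
        , div_mul_cancel₀ _ (ne_of_gt hwp)]
  · unfold normSq kcost
    apply Finset.sum_congr rfl
    intro j _
    rcases eq_or_ne (D j) 0 with hD | hD
    · simp [hD]
    · simp only [if_neg hD]
      set o := om (S j) with ho
      have hop : 0 < o := om_pos _
      have hDp : 0 < |D j| := abs_pos.2 hD
      have hq : (0:ℝ) ≤ |D j| / o := by positivity
      set w := Real.sqrt (|D j| / o) with hwdef
      have hwp : 0 < w := Real.sqrt_pos.2 (by positivity)
      have hw2 : w ^ 2 = |D j| / o := Real.sq_sqrt hq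
      have hD2 : D j ^ 2 = |D j| ^ 2 := (sq_abs _).symm
      have hosq : o ^ 2 = 1 + S j ^ 2 := om_sq _
      have key : (D j / w) ^ 2 = |D j| * o := by
        rw [div_pow, hw2, hD2]
        field_simp
      have key2 : w ^ 2 + (-w * S j) ^ 2 = |D j| * o := by
        have : w ^ 2 + (-w * S j) ^ 2 = w ^ 2 * (1 + S j ^ 2) := by ring
        rw [this, hw2, ← hosq]
        field_simp
      rw [key]
      nlinarith [key2]

/-- extraction of the kink representation and kink-level minimality -/
lemma exists_kink_min {n : ℕ} (x y : ℕ → ℝ) (f : ℝ → ℝ)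
    (hf : IsMinNormNet (fun i : Fin n => (x i, y i)) f) :
    ∃ (m : ℕ) (D S : Fin m → ℝ) (A B : ℝ),
      (∀ t, f t = kfun m D S A B t) ∧
      (∀ m' (D' S' : Fin m' → ℝ) (A' B' : ℝ),
        (∀ i : Fin n, kfun m' D' S' A' B' (x i) = y i) →
        kcost m D S ≤ kcost m' D' S') := by
  classical
  obtain ⟨m, a, w, b, a₀, b₀, hfe, hint, hmin⟩ := hf
  refine ⟨m, fun j => a j * |w j|, fun j => if w j = 0 then 0 else -(b j) / (w j),
    a₀ + ∑ j, (if w j < 0 then a j * w j else 0),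
    b₀ + ∑ j, (if w j < 0 then a j * b j else if w j = 0 then a j * max (b j) 0 else 0),
    ?_, ?_⟩
  · intro t
    rw [hfe]
    unfold netFun kfun
    rw [Finset.sum_congr rfl (fun j _ => net_term_eq (a j) (w j) (b j) t)]
    rw [Finset.sum_add_distrib, Finset.sum_add_distrib, ← Finset.sum_mul]
    ring
  · intro m' D' S' A' B' hint'
    obtain ⟨a', w', b', a₀', b₀', hne, hns⟩ := kink_to_net m' D' S' A' B'
    have hintnet : Interpolates (fun i : Fin n => (x i, y i)) (netFun m' a' w' b' a₀' b₀') := by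
      intro i
      simp only
      rw [hne]
      exact hint' i
    have h1 : kcost m (fun j => a j * |w j|) (fun j => if w j = 0 then 0 else -(b j) / (w j))
        ≤ normSq m a w b := by
      unfold kcost normSq
      apply Finset.sum_le_sum
      intro j _
      have h := net_term_cost (a j) (w j) (b j)
      rw [abs_mul, abs_abs]
      exact h
    calc kcost m _ _ ≤ normSq m a w b := h1
      _ ≤ normSq m' a' w' b' := hmin m' a' w' b' a₀' b₀' hintnet
      _ = kcost m' D' S' := hns


lemma relu_of_le {t s : ℝ} (h : t ≤ s) : max (t - s) 0 = 0 :=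
  max_eq_right (by linarith)

lemma relu_of_ge {t s : ℝ} (h : s ≤ t) : max (t - s) 0 = t - s :=
  max_eq_left (by linarith)

lemma relu_slope (Dj s u v z : ℝ) (huv : u < v) (hvz : v < z)
    (h : 0 ≤ Dj ∨ s ≤ u ∨ z ≤ s) :
    (Dj * max (v - s) 0 - Dj * max (u - s) 0) * (z - v)
      ≤ (Dj * max (z - s) 0 - Dj * max (v - s) 0) * (v - u) := by
  rcases le_or_gt s u with h1 | h1
  · rw [relu_of_ge (by linarith : s ≤ u), relu_of_ge (by linarith : s ≤ v),
      relu_of_ge (by linarith : s ≤ z)]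
    nlinarith
  rcases le_or_gt z s with h2 | h2
  · rw [relu_of_le (by linarith : u ≤ s), relu_of_le (by linarith : v ≤ s),
      relu_of_le (by linarith : z ≤ s)]
    nlinarith
  have hD : 0 ≤ Dj := by
    rcases h with h | h | h
    exacts [h, absurd h (not_le.2 h1), absurd h (not_le.2 h2)]
  rcases le_or_gt s v with h3 | h3
  · rw [relu_of_le (le_of_lt h1), relu_of_ge h3, relu_of_ge (by linarith : s ≤ z)]
    nlinarith [mul_nonneg (mul_nonneg hD (by linarith : (0:ℝ) ≤ z - v)) (by linarith : (0:ℝ) ≤ s - u)]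
  · rw [relu_of_le (le_of_lt h1), relu_of_le (le_of_lt h3), relu_of_ge (le_of_lt h2)]
    nlinarith [mul_nonneg (mul_nonneg hD (by linarith : (0:ℝ) ≤ z - s)) (by linarith : (0:ℝ) ≤ v - u)]

lemma kfun_slope (m : ℕ) (D S : Fin m → ℝ) (A B : ℝ) (u v z : ℝ) (huv : u < v) (hvz : v < z)
    (h : ∀ j, 0 ≤ D j ∨ S j ≤ u ∨ z ≤ S j) :
    (kfun m D S A B v - kfun m D S A B u) * (z - v)
      ≤ (kfun m D S A B z - kfun m D S A B v) * (v - u) := by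
  have key : (∑ j, (D j * max (v - S j) 0 - D j * max (u - S j) 0)) * (z - v)
      ≤ (∑ j, (D j * max (z - S j) 0 - D j * max (v - S j) 0)) * (v - u) := by
    rw [Finset.sum_mul, Finset.sum_mul]
    exact Finset.sum_le_sum fun j _ => relu_slope (D j) (S j) u v z huv hvz (h j)
  rw [Finset.sum_sub_distrib, Finset.sum_sub_distrib] at key
  unfold kfun
  nlinarith [key]

lemma relu_chord (Dj s p q t : ℝ) (hpt : p ≤ t) (htq : t ≤ q)
    (h : 0 ≤ Dj ∨ s ≤ p ∨ q ≤ s) :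
    Dj * max (t - s) 0 * (q - p)
      ≤ Dj * max (p - s) 0 * (q - t) + Dj * max (q - s) 0 * (t - p) := by
  rcases le_or_gt s p with h1 | h1
  · rw [relu_of_ge h1, relu_of_ge (by linarith : s ≤ t), relu_of_ge (by linarith : s ≤ q)]
    nlinarith
  rcases le_or_gt q s with h2 | h2
  · rw [relu_of_le (by linarith : p ≤ s), relu_of_le (by linarith : t ≤ s), relu_of_le h2]
    nlinarith
  have hD : 0 ≤ Dj := by
    rcases h with h | h | h
    exacts [h, absurd h (not_le.2 h1), absurd h (not_le.2 h2)]
  rcases le_or_gt t s with h3 | h3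
  · rw [relu_of_le (le_of_lt h1), relu_of_le h3, relu_of_ge (le_of_lt h2)]
    nlinarith [mul_nonneg (mul_nonneg hD (by linarith : (0:ℝ) ≤ q - s)) (by linarith : (0:ℝ) ≤ t - p)]
  · rw [relu_of_le (le_of_lt h1), relu_of_ge (le_of_lt h3), relu_of_ge (le_of_lt h2)]
    nlinarith [mul_nonneg (mul_nonneg hD (by linarith : (0:ℝ) ≤ q - t)) (by linarith : (0:ℝ) ≤ s - p),
      mul_nonneg (mul_nonneg hD (by linarith : (0:ℝ) ≤ s - p)) (by linarith : (0:ℝ) ≤ t - p)]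

lemma kfun_chord (m : ℕ) (D S : Fin m → ℝ) (A B : ℝ) (p q t : ℝ) (hpt : p ≤ t) (htq : t ≤ q)
    (h : ∀ j, 0 ≤ D j ∨ S j ≤ p ∨ q ≤ S j) :
    kfun m D S A B t * (q - p)
      ≤ kfun m D S A B p * (q - t) + kfun m D S A B q * (t - p) := by
  have key : (∑ j, D j * max (t - S j) 0) * (q - p)
      ≤ (∑ j, D j * max (p - S j) 0) * (q - t) + (∑ j, D j * max (q - S j) 0) * (t - p) := by
    rw [Finset.sum_mul, Finset.sum_mul, Finset.sum_mul, ← Finset.sum_add_distrib]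
    exact Finset.sum_le_sum fun j _ => relu_chord (D j) (S j) p q t hpt htq (h j)
  unfold kfun
  nlinarith [key]

lemma abs_le_max_of_between {u v w c : ℝ}
    (h : (v ≤ u ∧ u ≤ w) ∨ (w ≤ u ∧ u ≤ v)) :
    |u - c| ≤ max |v - c| |w - c| := by
  have hv1 := neg_abs_le (v - c)
  have hv2 := le_abs_self (v - c)
  have hw1 := neg_abs_le (w - c)
  have hw2 := le_abs_self (w - c)
  have m1 := le_max_left |v - c| |w - c|
  have m2 := le_max_right |v - c| |w - c|
  rw [abs_le]
  rcases h with ⟨h1, h2⟩ | ⟨h1, h2⟩ <;> constructor <;> linarith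


section Surgery

variable {n : ℕ} {x y : ℕ → ℝ} {m : ℕ} {D S : Fin m → ℝ} {A B : ℝ}

/-- replace a single kink (plus an affine correction), exploiting minimality -/
lemma single_surgery
    (hint : ∀ i : Fin n, kfun m D S A B (x i) = y i)
    (hmin : ∀ m' (D' S' : Fin m' → ℝ) (A' B' : ℝ),
      (∀ i : Fin n, kfun m' D' S' A' B' (x i) = y i) → kcost m D S ≤ kcost m' D' S')
    (j0 : Fin m) (d0 s0 cA cB : ℝ)
    (hval : ∀ i : Fin n,
      d0 * max (x i - s0) 0 + cA * x i + cB = D j0 * max (x i - S j0) 0) :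
    2 * |D j0| * om (S j0) ≤ 2 * |d0| * om s0 := by
  classical
  set D' : Fin m → ℝ := fun j => if j = j0 then d0 else D j with hD'
  set S' : Fin m → ℝ := fun j => if j = j0 then s0 else S j with hS'
  have hint' : ∀ i : Fin n, kfun m D' S' (A + cA) (B + cB) (x i) = y i := by
    intro i
    have hsum := sum_diff_one (fun j => D' j * max (x i - S' j) 0)
      (fun j => D j * max (x i - S j) 0) j0
      (fun j hj => by simp [hD', hS', if_neg hj])
    have hv := hval i
    have := hint i
    unfold kfun at this ⊢
    rw [hsum]
    simp only [hD', hS', if_pos rfl]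
    simp only [hD', hS', if_pos rfl] at hsum
    linarith [this, hv]
  have hc := hmin m D' S' (A + cA) (B + cB) hint'
  have hcost := sum_diff_one (fun j => 2 * |D' j| * om (S' j))
    (fun j => 2 * |D j| * om (S j)) j0
    (fun j hj => by simp [hD', hS', if_neg hj])
  unfold kcost at hc
  rw [hcost] at hc
  simp only [hD', hS', if_pos rfl] at hc
  linarith

/-- replace a pair of kinks, exploiting minimality -/
lemma double_surgery
    (hint : ∀ i : Fin n, kfun m D S A B (x i) = y i)
    (hmin : ∀ m' (D' S' : Fin m' → ℝ) (A' B' : ℝ),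
      (∀ i : Fin n, kfun m' D' S' A' B' (x i) = y i) → kcost m D S ≤ kcost m' D' S')
    (j0 j1 : Fin m) (hne : j0 ≠ j1) (d0 s0 d1 s1 : ℝ)
    (hval : ∀ i : Fin n,
      d0 * max (x i - s0) 0 + d1 * max (x i - s1) 0
        = D j0 * max (x i - S j0) 0 + D j1 * max (x i - S j1) 0) :
    2 * |D j0| * om (S j0) + 2 * |D j1| * om (S j1)
      ≤ 2 * |d0| * om s0 + 2 * |d1| * om s1 := by
  classical
  set D' : Fin m → ℝ := fun j => if j = j0 then d0 else if j = j1 then d1 else D j with hD'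
  set S' : Fin m → ℝ := fun j => if j = j0 then s0 else if j = j1 then s1 else S j with hS'
  have hne' : j1 ≠ j0 := hne.symm
  have hint' : ∀ i : Fin n, kfun m D' S' A B (x i) = y i := by
    intro i
    have hsum := sum_diff_two (fun j => D' j * max (x i - S' j) 0)
      (fun j => D j * max (x i - S j) 0) j0 j1 hne
      (fun j hj0 hj1 => by simp [hD', hS', if_neg hj0, if_neg hj1])
    have hv := hval i
    have := hint i
    unfold kfun at this ⊢
    rw [hsum]
    simp only [hD', hS', if_pos rfl, if_neg hne', eq_self_iff_true, if_true] at hsum ⊢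
    linarith [this, hv]
  have hc := hmin m D' S' A B hint'
  have hcost := sum_diff_two (fun j => 2 * |D' j| * om (S' j))
    (fun j => 2 * |D j| * om (S j)) j0 j1 hne
    (fun j hj0 hj1 => by simp [hD', hS', if_neg hj0, if_neg hj1])
  unfold kcost at hc
  rw [hcost] at hc
  simp only [hD', hS', if_pos rfl, if_neg hne', eq_self_iff_true, if_true] at hc
  linarith


lemma xle (hsorted : ∀ i j, i < j → j < n → x i < x j) {i j : ℕ} (hij : i ≤ j) (hj : j < n) :
    x i ≤ x j := by
  rcases eq_or_lt_of_le hij with h | h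
  · rw [h]
  · exact le_of_lt (hsorted i j h hj)

variable (hn : 2 ≤ n) (hx0 : 0 ≤ x 0)
  (hsorted : ∀ i j, i < j → j < n → x i < x j)
  (hint : ∀ i : Fin n, kfun m D S A B (x i) = y i)
  (hmin : ∀ m' (D' S' : Fin m' → ℝ) (A' B' : ℝ),
    (∀ i : Fin n, kfun m' D' S' A' B' (x i) = y i) → kcost m D S ≤ kcost m' D' S')

include hn hsorted hint hmin

/-- a kink left of all data points is absorbed into the skip connection -/
lemma no_kink_left (j0 : Fin m) (hj : S j0 < x 0) : D j0 = 0 := by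
  have key := single_surgery hint hmin j0 0 0 (D j0) (-(D j0 * S j0)) ?_
  · simp only [abs_zero] at key
    have := om_pos (S j0)
    have h0 := abs_nonneg (D j0)
    have : |D j0| ≤ 0 := by nlinarith
    exact abs_eq_zero.1 (le_antisymm this h0)
  · intro i
    have hx : S j0 ≤ x ↑i := by
      have : x 0 ≤ x ↑i := xle hsorted (Nat.zero_le _) i.isLt
      linarith
    rw [relu_of_ge hx]
    ring

/-- a kink right of all data points can be deleted -/
lemma no_kink_right (j0 : Fin m) (hj : x (n - 1) ≤ S j0) : D j0 = 0 := by
  have key := single_surgery hint hmin j0 0 0 0 0 ?_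
  · simp only [abs_zero] at key
    have := om_pos (S j0)
    have h0 := abs_nonneg (D j0)
    have : |D j0| ≤ 0 := by nlinarith
    exact abs_eq_zero.1 (le_antisymm this h0)
  · intro i
    have hx : x ↑i ≤ S j0 := by
      have : x ↑i ≤ x (n - 1) := xle hsorted (by omega) (by omega)
      linarith
    rw [relu_of_le hx]
    ring

include hx0 in
/-- a kink strictly between `x 0` and `x 1` can be moved to `x 1`, more cheaply -/
lemma no_kink_first (j0 : Fin m) (hj0 : x 0 ≤ S j0) (hj1 : S j0 < x 1) : D j0 = 0 := by
  by_contra hD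
  set Δ := D j0 with hΔ
  set s := S j0 with hs
  set p0 := x 0 with hp0
  set p1 := x 1 with hp1
  have hL : 0 < p1 - p0 := by
    have := hsorted 0 1 (by omega) (by omega); linarith
  set d0 := Δ * (s - p0) / (p1 - p0) with hd0
  have key := single_surgery hint hmin j0 d0 p1 (Δ - d0) (d0 * p1 - Δ * s) ?_
  · -- cost contradiction
    have hc := om_cauchy s p1
    have hos := om_pos s
    have hop := om_pos p1
    have hosq := om_sq s
    have hopq := om_sq p1
    have hD' : 0 < |Δ| := abs_pos.2 hD
    have habs : |d0| = |Δ| * (s - p0) / (p1 - p0) := by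
      rw [hd0, abs_div, abs_mul, abs_of_pos hL, abs_of_nonneg (by linarith : (0:ℝ) ≤ s - p0)]
    -- (s - p0) * om p1 < (p1 - p0) * om s
    have hstrict : (s - p0) * om p1 < (p1 - p0) * om s := by
      have h1 : (s - p0) * om p1 * om p1 = (s - p0) * (1 + p1 ^ 2) := by
        nlinarith [hopq]
      have h2 : (s - p0) * (1 + p1 ^ 2) < (p1 - p0) * (1 + s * p1) := by
        nlinarith [mul_nonneg hx0 (by linarith : (0:ℝ) ≤ p1)]
      have h3 : (p1 - p0) * (1 + s * p1) ≤ (p1 - p0) * (om s * om p1) := by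
        nlinarith [hc]
      nlinarith [hop]
    rw [habs] at key
    have : 2 * (|Δ| * (s - p0) / (p1 - p0)) * om p1 < 2 * |Δ| * om s := by
      have he : 2 * (|Δ| * (s - p0) / (p1 - p0)) * om p1
          = 2 * (|Δ| * (s - p0)) * om p1 / (p1 - p0) := by ring
      rw [he, div_lt_iff₀ hL]
      nlinarith [hstrict, hD']
    linarith
  · intro i
    have hcase : (↑i : ℕ) = 0 ∨ 1 ≤ (↑i : ℕ) := by omega
    rcases hcase with h | h
    · rw [h]
      rw [relu_of_le (le_of_lt (by linarith : p0 < p1)), relu_of_le hj0]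
      rw [hd0]
      field_simp
      ring
    · have hx1 : p1 ≤ x ↑i := xle hsorted h i.isLt
      rw [relu_of_ge hx1, relu_of_ge (by linarith : S j0 ≤ x ↑i)]
      ring

include hx0 in
/-- a kink strictly between `x (n-2)` and `x (n-1)` can be moved to `x (n-2)`, more cheaply -/
lemma no_kink_last (j0 : Fin m) (hj0 : x (n - 2) < S j0) (hj1 : S j0 < x (n - 1)) :
    D j0 = 0 := by
  by_contra hD
  set Δ := D j0 with hΔ
  set s := S j0 with hs
  set pL := x (n - 2) with hpL
  set pR := x (n - 1) with hpR
  have hL : 0 < pR - pL := by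
    have := hsorted (n - 2) (n - 1) (by omega) (by omega); linarith
  have hpL0 : 0 ≤ pL := le_trans hx0 (xle hsorted (Nat.zero_le _) (by omega))
  set d0 := Δ * (pR - s) / (pR - pL) with hd0
  have key := single_surgery hint hmin j0 d0 pL 0 0 ?_
  · have hos := om_pos s
    have hopL := om_pos pL
    have hD' : 0 < |Δ| := abs_pos.2 hD
    have hmon : om pL ≤ om s := om_mono hpL0 (le_of_lt hj0)
    have habs : |d0| = |Δ| * (pR - s) / (pR - pL) := by
      rw [hd0, abs_div, abs_mul, abs_of_pos hL, abs_of_nonneg (by linarith : (0:ℝ) ≤ pR - s)]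
    rw [habs] at key
    have hfrac : |Δ| * (pR - s) / (pR - pL) < |Δ| := by
      rw [div_lt_iff₀ hL]
      nlinarith
    nlinarith [key, hfrac, hmon, hopL]
  · intro i
    have hcase : (↑i : ℕ) ≤ n - 2 ∨ (↑i : ℕ) = n - 1 := by omega
    rcases hcase with h | h
    · have hxi : x ↑i ≤ pL := xle hsorted h (by omega)
      rw [relu_of_le (by linarith : x ↑i ≤ pL), relu_of_le (by linarith : x ↑i ≤ S j0)]
      ring
    · rw [h]
      rw [relu_of_ge (by linarith : pL ≤ pR), relu_of_ge (by linarith : S j0 ≤ pR)]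
      rw [hd0]
      field_simp
      simp only [hΔ, hs, zero_mul, add_zero]

include hx0 in
/-- all active kinks lie in `[x 1, x (n-2)]` -/
lemma kink_range (j0 : Fin m) (hD : D j0 ≠ 0) :
    x 1 ≤ S j0 ∧ S j0 ≤ x (n - 2) := by
  constructor
  · by_contra h
    push_neg at h
    rcases lt_or_ge (S j0) (x 0) with h0 | h0
    · exact hD (no_kink_left hn hsorted hint hmin j0 h0)
    · exact hD (no_kink_first hn hx0 hsorted hint hmin j0 h0 h)
  · by_contra h
    push_neg at h
    rcases le_or_gt (x (n - 1)) (S j0) with h0 | h0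
    · exact hD (no_kink_right hn hsorted hint hmin j0 h0)
    · exact hD (no_kink_last hn hx0 hsorted hint hmin j0 h h0)


include hx0 in
lemma left_piece {t : ℝ} (ht : t ≤ x 1) : kfun m D S A B t = gPiece x y 0 t := by
  have hzero : ∀ j : Fin m, D j * max (t - S j) 0 = 0 := by
    intro j
    rcases eq_or_ne (D j) 0 with h | h
    · rw [h]; ring
    · have := (kink_range hn hx0 hsorted hint hmin j h).1
      rw [relu_of_le (by linarith)]
      ring
  have hft : kfun m D S A B t = A * t + B := by
    unfold kfun
    rw [Finset.sum_congr rfl (fun j _ => hzero j)]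
    simp
  have h0 : A * x 0 + B = y 0 := by
    have hi := hint ⟨0, by omega⟩
    have hx : x 0 ≤ x 1 := xle hsorted (by omega) (by omega)
    have hz : ∀ j : Fin m, D j * max (x 0 - S j) 0 = 0 := by
      intro j
      rcases eq_or_ne (D j) 0 with h | h
      · rw [h]; ring
      · have := (kink_range hn hx0 hsorted hint hmin j h).1
        rw [relu_of_le (by linarith)]; ring
    unfold kfun at hi
    rw [Finset.sum_congr rfl (fun j _ => hz j)] at hi
    simpa using hi
  have h1 : A * x 1 + B = y 1 := by
    have hi := hint ⟨1, by omega⟩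
    have hz : ∀ j : Fin m, D j * max (x 1 - S j) 0 = 0 := by
      intro j
      rcases eq_or_ne (D j) 0 with h | h
      · rw [h]; ring
      · have := (kink_range hn hx0 hsorted hint hmin j h).1
        rw [relu_of_le (by linarith)]; ring
    unfold kfun at hi
    rw [Finset.sum_congr rfl (fun j _ => hz j)] at hi
    simpa using hi
  have hne : x 1 - x 0 ≠ 0 := by
    have := hsorted 0 1 (by omega) (by omega); intro h; linarith [this]
  rw [hft]
  unfold gPiece affThrough
  rw [← h0, ← h1]
  field_simp
  ring

include hx0 in
lemma right_piece {t : ℝ} (ht : x (n - 2) ≤ t) :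
    kfun m D S A B t = gPiece x y (n - 2) t := by
  have hlin : ∀ u : ℝ, x (n - 2) ≤ u →
      kfun m D S A B u = (A + ∑ j, D j) * u + (B - ∑ j, D j * S j) := by
    intro u hu
    have hterm : ∀ j : Fin m, D j * max (u - S j) 0 = D j * u - D j * S j := by
      intro j
      rcases eq_or_ne (D j) 0 with h | h
      · rw [h]; ring
      · have := (kink_range hn hx0 hsorted hint hmin j h).2
        rw [relu_of_ge (by linarith)]
        ring
    unfold kfun
    rw [Finset.sum_congr rfl (fun j _ => hterm j), Finset.sum_sub_distrib,
      ← Finset.sum_mul]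
    ring
  have hft := hlin t ht
  have hep : x (n - 2) ≤ x (n - 2) := le_refl _
  have h0 : (A + ∑ j, D j) * x (n - 2) + (B - ∑ j, D j * S j) = y (n - 2) := by
    rw [← hlin (x (n - 2)) hep]
    have hi := hint ⟨n - 2, by omega⟩
    simpa using hi
  have h1 : (A + ∑ j, D j) * x (n - 1) + (B - ∑ j, D j * S j) = y (n - 1) := by
    rw [← hlin (x (n - 1)) (xle hsorted (by omega) (by omega))]
    have hi := hint ⟨n - 1, by omega⟩
    simpa using hi
  have hidx : n - 2 + 1 = n - 1 := by omega
  have hne : x (n - 1) - x (n - 2) ≠ 0 := by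
    have := hsorted (n - 2) (n - 1) (by omega) (by omega); intro h; linarith [this]
  rw [hft]
  unfold gPiece affThrough
  simp only [hidx]
  rw [← h0, ← h1]
  field_simp
  ring


omit hn hsorted hint hmin in
lemma le_of_factor {c u v : ℝ} (hc : 0 < c) (h : c * u = v) (hv : 0 ≤ v) : 0 ≤ u := by
  by_contra hu
  push_neg at hu
  nlinarith [mul_neg_of_pos_of_neg hc hu]

omit hn hsorted hint hmin in
lemma lt_of_factor {c u v : ℝ} (hc : 0 < c) (h : c * u = v) (hv : 0 < v) : 0 < u := by
  by_contra hu
  push_neg at hu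
  nlinarith [mul_nonpos_of_nonneg_of_nonpos (le_of_lt hc) hu]

omit hn hsorted hint hmin in
lemma min4_le (a b c d : ℝ) :
    min a (min b (min c d)) ≤ a ∧ min a (min b (min c d)) ≤ b ∧
      min a (min b (min c d)) ≤ c ∧ min a (min b (min c d)) ≤ d :=
  ⟨min_le_left _ _, le_trans (min_le_right _ _) (min_le_left _ _),
    le_trans (min_le_right _ _) (le_trans (min_le_right _ _) (min_le_left _ _)),
    le_trans (min_le_right _ _) (le_trans (min_le_right _ _) (min_le_right _ _))⟩

omit hn hsorted hint hmin in
lemma cost_drop {Δ Δ' s s' sE sE' ε a0 a1 : ℝ} (hε : 0 < ε) (h1 : ε < Δ) (h2 : Δ' + ε ≤ 0)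
    (hm0 : (Δ - ε) * |sE - s| ≤ ε * a0) (hm1 : (-Δ' - ε) * |sE' - s'| ≤ ε * a1)
    (hkey : a0 + a1 < om s + om s') :
    2 * |Δ - ε| * om sE + 2 * |Δ' + ε| * om sE' < 2 * |Δ| * om s + 2 * |Δ'| * om s' := by
  have hd : 0 < Δ - ε := by linarith
  have hd' : 0 ≤ -Δ' - ε := by linarith
  rw [abs_of_pos hd, abs_of_nonpos h2, abs_of_pos (by linarith : (0:ℝ) < Δ),
    abs_of_neg (by linarith : Δ' < 0)]
  have l0 : om sE ≤ om s + |sE - s| := om_lip sE s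
  have l1 : om sE' ≤ om s' + |sE' - s'| := om_lip sE' s'
  have p0 : (Δ - ε) * om sE ≤ (Δ - ε) * (om s + |sE - s|) :=
    mul_le_mul_of_nonneg_left l0 (le_of_lt hd)
  have p1 : (-Δ' - ε) * om sE' ≤ (-Δ' - ε) * (om s' + |sE' - s'|) :=
    mul_le_mul_of_nonneg_left l1 hd'
  have q0 : (Δ - ε) * (om s + |sE - s|) = (Δ - ε) * om s + (Δ - ε) * |sE - s| := by ring
  have q1 : (-Δ' - ε) * (om s' + |sE' - s'|)
      = (-Δ' - ε) * om s' + (-Δ' - ε) * |sE' - s'| := by ring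
  have hk : ε * (a0 + a1) < ε * (om s + om s') := by
    exact mul_lt_mul_of_pos_left hkey hε
  have hk1 : ε * (a0 + a1) = ε * a0 + ε * a1 := by ring
  have hk2 : ε * (om s + om s') = ε * om s + ε * om s' := by ring
  have r0 : (Δ - ε) * om s = Δ * om s - ε * om s := by ring
  have r1 : (-Δ' - ε) * om s' = -Δ' * om s' - ε * om s' := by ring
  nlinarith [p0, p1]

/-- two opposite kinks strictly inside the same data interval: impossible -/
lemma surgeryF1 (i : ℕ) (hi : i + 1 < n) (j0 j1 : Fin m) (hne : j0 ≠ j1)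
    (hD0 : 0 < D j0) (h0a : x i < S j0) (h0b : S j0 < x (i + 1))
    (hD1 : D j1 < 0) (h1a : x i < S j1) (h1b : S j1 < x (i + 1)) : False := by
  set P := x i with hP
  set Q := x (i + 1) with hQ
  set Δ := D j0 with hΔ0
  set Δ' := D j1 with hΔ1
  set s := S j0 with hsdef
  set s' := S j1 with hs'def
  have hPQ : P < Q := hsorted i (i + 1) (by omega) hi
  set ε := min (Δ / 2) (min ((-Δ') / 2)
    (min (Δ * (Q - s) / (2 * (Q - s'))) (Δ * (s - P) / (2 * (s' - P))))) with hεdef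
  have hc1 : (0:ℝ) < Δ / 2 := by linarith
  have hc2 : (0:ℝ) < (-Δ') / 2 := by linarith
  have hc3 : (0:ℝ) < Δ * (Q - s) / (2 * (Q - s')) := by
    apply div_pos (by nlinarith) (by linarith)
  have hc4 : (0:ℝ) < Δ * (s - P) / (2 * (s' - P)) := by
    apply div_pos (by nlinarith) (by linarith)
  have hεpos : 0 < ε := lt_min hc1 (lt_min hc2 (lt_min hc3 hc4))
  obtain ⟨hε1, hε2, hε3', hε4'⟩ := min4_le (Δ / 2) ((-Δ') / 2)
    (Δ * (Q - s) / (2 * (Q - s'))) (Δ * (s - P) / (2 * (s' - P)))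
  rw [← hεdef] at hε1 hε2 hε3' hε4'
  have hε3 : ε * (2 * (Q - s')) ≤ Δ * (Q - s) := (le_div_iff₀ (by linarith)).1 hε3'
  have hε4 : ε * (2 * (s' - P)) ≤ Δ * (s - P) := (le_div_iff₀ (by linarith)).1 hε4'
  clear_value ε
  have hd : 0 < Δ - ε := by linarith
  set sE := Q - (Δ * (Q - s) - ε * (Q - s')) / (Δ - ε) with hsE
  have e1 : (Δ - ε) * (Q - sE) = Δ * (Q - s) - ε * (Q - s') := by
    rw [hsE]; field_simp; ring
  clear_value sE
  have hnum : 0 < Δ * (Q - s) - ε * (Q - s') := by nlinarith [hε3]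
  have hsEQ : sE < Q := by
    have := lt_of_factor hd e1 hnum
    linarith
  have hsEP : P < sE := by
    have eq : (Δ - ε) * (sE - P) = (Δ - ε) * (Q - P) - Δ * (Q - s) + ε * (Q - s') := by
      linear_combination -e1
    have hv : 0 < (Δ - ε) * (Q - P) - Δ * (Q - s) + ε * (Q - s') := by nlinarith [hε4]
    have := lt_of_factor hd eq hv
    linarith
  have move0 : (Δ - ε) * (sE - s) = ε * (s - s') := by linear_combination -e1
  have habs : (Δ - ε) * |sE - s| = ε * |s - s'| := by
    have h := congrArg abs move0
    rwa [abs_mul, abs_mul, abs_of_pos hd, abs_of_pos hεpos] at h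
  have hval : ∀ i' : Fin n,
      (Δ - ε) * max (x ↑i' - sE) 0 + (Δ' + ε) * max (x ↑i' - s') 0
        = D j0 * max (x ↑i' - S j0) 0 + D j1 * max (x ↑i' - S j1) 0 := by
    intro i'
    rw [← hΔ0, ← hΔ1, ← hsdef, ← hs'def]
    have hcase : (↑i' : ℕ) ≤ i ∨ i + 1 ≤ (↑i' : ℕ) := by omega
    rcases hcase with h | h
    · have ht : x ↑i' ≤ P := xle hsorted h (by omega)
      rw [relu_of_le (by linarith), relu_of_le (by linarith), relu_of_le (by linarith)]
      ring
    · have ht : Q ≤ x ↑i' := xle hsorted h i'.isLt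
      rw [relu_of_ge (by linarith), relu_of_ge (by linarith), relu_of_ge (by linarith)]
      linear_combination e1
  have key := double_surgery hint hmin j0 j1 hne (Δ - ε) sE (Δ' + ε) s' hval
  have drop := cost_drop (Δ := Δ) (Δ' := Δ') (s := s) (s' := s') (sE := sE) (sE' := s')
    (a0 := |s - s'|) (a1 := 0) hεpos (by linarith) (by linarith)
    (le_of_eq habs) (by simp) ?_
  · rw [← hΔ0, ← hΔ1, ← hsdef, ← hs'def] at key
    linarith
  · have h1 : |s - s'| ≤ |s| + |s'| := by
      have h := abs_add_le s (-s')
      rwa [abs_neg, ← sub_eq_add_neg] at h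
    have := abs_lt_om s
    have := abs_lt_om s'
    linarith

/-- convex kink inside `(x k, x (k+1))` together with a concave kink in
`[x (k+1), x (k+2))`: impossible -/
lemma surgeryB (k : ℕ) (hk : k + 2 < n) (j0 j1 : Fin m) (hne : j0 ≠ j1)
    (hD0 : 0 < D j0) (h0a : x k < S j0) (h0b : S j0 < x (k + 1))
    (hD1 : D j1 < 0) (h1a : x (k + 1) ≤ S j1) (h1b : S j1 < x (k + 2)) : False := by
  set p := x k with hp
  set q := x (k + 1) with hq
  set r := x (k + 2) with hr
  set Δ := D j0 with hΔ0
  set Δ' := D j1 with hΔ1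
  set s := S j0 with hsdef
  set s' := S j1 with hs'def
  have hpq : p < q := hsorted k (k + 1) (by omega) (by omega)
  have hqr : q < r := hsorted (k + 1) (k + 2) (by omega) hk
  set ε := min (Δ / 2) (min ((-Δ') / 2)
    (min (Δ * (s - p) / (2 * (q - p))) ((-Δ') * (r - s') / (2 * (r - q))))) with hεdef
  have hc1 : (0:ℝ) < Δ / 2 := by linarith
  have hc2 : (0:ℝ) < (-Δ') / 2 := by linarith
  have hc3 : (0:ℝ) < Δ * (s - p) / (2 * (q - p)) := by
    apply div_pos (by nlinarith) (by linarith)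
  have hc4 : (0:ℝ) < (-Δ') * (r - s') / (2 * (r - q)) := by
    apply div_pos (by nlinarith) (by linarith)
  have hεpos : 0 < ε := lt_min hc1 (lt_min hc2 (lt_min hc3 hc4))
  obtain ⟨hε1, hε2, hε3', hε4'⟩ := min4_le (Δ / 2) ((-Δ') / 2)
    (Δ * (s - p) / (2 * (q - p))) ((-Δ') * (r - s') / (2 * (r - q)))
  rw [← hεdef] at hε1 hε2 hε3' hε4'
  have hε3 : ε * (2 * (q - p)) ≤ Δ * (s - p) := (le_div_iff₀ (by linarith)).1 hε3'
  have hε4 : ε * (2 * (r - q)) ≤ (-Δ') * (r - s') := (le_div_iff₀ (by linarith)).1 hε4'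
  clear_value ε
  have hd : 0 < Δ - ε := by linarith
  have hd' : Δ' + ε < 0 := by linarith
  set sE := q - Δ * (q - s) / (Δ - ε) with hsE
  have e1 : (Δ - ε) * (q - sE) = Δ * (q - s) := by rw [hsE]; field_simp; ring
  clear_value sE
  set sE' := r - (Δ' * (r - s') + ε * (r - q)) / (Δ' + ε) with hsE'
  have e2 : (Δ' + ε) * (r - sE') = Δ' * (r - s') + ε * (r - q) := by
    rw [hsE']
    have h : r - (r - (Δ' * (r - s') + ε * (r - q)) / (Δ' + ε))
        = (Δ' * (r - s') + ε * (r - q)) / (Δ' + ε) := by ring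
    rw [h, mul_comm, div_mul_cancel₀ _ (ne_of_lt hd')]
  clear_value sE'
  have move0 : (Δ - ε) * (s - sE) = ε * (q - s) := by linear_combination e1
  have move1 : (-Δ' - ε) * (sE' - s') = ε * (s' - q) := by linear_combination e2
  have hd'' : 0 < -Δ' - ε := by linarith
  have hsEs : sE ≤ s := by
    have := le_of_factor hd move0 (by nlinarith : (0:ℝ) ≤ ε * (q - s))
    linarith
  have hsEp : p < sE := by
    have eq : (Δ - ε) * (sE - p) = (Δ - ε) * (q - p) - Δ * (q - s) := by
      linear_combination -e1
    have hv : 0 < (Δ - ε) * (q - p) - Δ * (q - s) := by nlinarith [hε3]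
    have := lt_of_factor hd eq hv
    linarith
  have hsE's' : s' ≤ sE' := by
    have := le_of_factor hd'' move1 (by nlinarith : (0:ℝ) ≤ ε * (s' - q))
    linarith
  have hsE'r : sE' < r := by
    have eq : (-Δ' - ε) * (r - sE') = (-Δ') * (r - s') - ε * (r - q) := by
      linear_combination -e2
    have hv : 0 < (-Δ') * (r - s') - ε * (r - q) := by nlinarith [hε4]
    have := lt_of_factor hd'' eq hv
    linarith
  have hval : ∀ i' : Fin n,
      (Δ - ε) * max (x ↑i' - sE) 0 + (Δ' + ε) * max (x ↑i' - sE') 0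
        = D j0 * max (x ↑i' - S j0) 0 + D j1 * max (x ↑i' - S j1) 0 := by
    intro i'
    rw [← hΔ0, ← hΔ1, ← hsdef, ← hs'def]
    have hcase : (↑i' : ℕ) ≤ k ∨ (↑i' : ℕ) = k + 1 ∨ k + 2 ≤ (↑i' : ℕ) := by omega
    rcases hcase with h | h | h
    · have ht : x ↑i' ≤ p := xle hsorted h (by omega)
      rw [relu_of_le (by linarith), relu_of_le (by linarith),
        relu_of_le (by linarith), relu_of_le (by linarith)]
      ring
    · have ht : x ↑i' = q := by rw [hq, h]
      rw [ht]
      rw [relu_of_ge (by linarith), relu_of_le (by linarith),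
        relu_of_ge (by linarith), relu_of_le (by linarith)]
      linear_combination e1
    · have ht : r ≤ x ↑i' := xle hsorted h i'.isLt
      rw [relu_of_ge (by linarith), relu_of_ge (by linarith),
        relu_of_ge (by linarith), relu_of_ge (by linarith)]
      linear_combination e1 + e2
  have key := double_surgery hint hmin j0 j1 hne (Δ - ε) sE (Δ' + ε) sE' hval
  have hm0 : (Δ - ε) * |sE - s| ≤ ε * (q - s) := by
    rw [abs_of_nonpos (by linarith : sE - s ≤ 0)]
    nlinarith [move0]
  have hm1 : (-Δ' - ε) * |sE' - s'| ≤ ε * (s' - q) := by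
    rw [abs_of_nonneg (by linarith : (0:ℝ) ≤ sE' - s')]
    nlinarith [move1]
  have drop := cost_drop (Δ := Δ) (Δ' := Δ') (s := s) (s' := s') (sE := sE) (sE' := sE')
    (a0 := q - s) (a1 := s' - q) hεpos (by linarith) (by linarith) hm0 hm1 ?_
  · rw [← hΔ0, ← hΔ1, ← hsdef, ← hs'def] at key
    linarith
  · have h1 := abs_lt_om s
    have h2 := abs_lt_om s'
    have h3 : -s ≤ |s| := neg_le_abs s
    have h4 : s' ≤ |s'| := le_abs_self s'
    linarith

/-- convex kink inside `(x k, x (k+1))` together with a concave kink in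
`(x (k-1), x k]`: impossible.  Stated with `o := x (k-1)`. -/
lemma surgeryA (k : ℕ) (hk1 : 1 ≤ k) (hk : k + 1 < n) (j0 j1 : Fin m) (hne : j0 ≠ j1)
    (hD0 : 0 < D j0) (h0a : x k < S j0) (h0b : S j0 < x (k + 1))
    (hD1 : D j1 < 0) (h1a : x (k - 1) < S j1) (h1b : S j1 ≤ x k) : False := by
  set o := x (k - 1) with ho
  set p := x k with hp
  set q := x (k + 1) with hq
  set Δ := D j0 with hΔ0
  set Δ' := D j1 with hΔ1
  set s := S j0 with hsdef
  set s' := S j1 with hs'def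
  have hop : o < p := by
    have := hsorted (k - 1) k (by omega) (by omega); exact this
  have hpq : p < q := hsorted k (k + 1) (by omega) hk
  set ε := min (Δ / 2) (min ((-Δ') / 2)
    (min (Δ * (q - s) / (2 * (q - p))) ((-Δ') * (s' - o) / (2 * (p - o))))) with hεdef
  have hc1 : (0:ℝ) < Δ / 2 := by linarith
  have hc2 : (0:ℝ) < (-Δ') / 2 := by linarith
  have hc3 : (0:ℝ) < Δ * (q - s) / (2 * (q - p)) := by
    apply div_pos (by nlinarith) (by linarith)
  have hc4 : (0:ℝ) < (-Δ') * (s' - o) / (2 * (p - o)) := by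
    apply div_pos (by nlinarith) (by linarith)
  have hεpos : 0 < ε := lt_min hc1 (lt_min hc2 (lt_min hc3 hc4))
  obtain ⟨hε1, hε2, hε3', hε4'⟩ := min4_le (Δ / 2) ((-Δ') / 2)
    (Δ * (q - s) / (2 * (q - p))) ((-Δ') * (s' - o) / (2 * (p - o)))
  rw [← hεdef] at hε1 hε2 hε3' hε4'
  have hε3 : ε * (2 * (q - p)) ≤ Δ * (q - s) := (le_div_iff₀ (by linarith)).1 hε3'
  have hε4 : ε * (2 * (p - o)) ≤ (-Δ') * (s' - o) := (le_div_iff₀ (by linarith)).1 hε4'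
  clear_value ε
  have hd : 0 < Δ - ε := by linarith
  have hd' : Δ' + ε < 0 := by linarith
  set sE := q - (Δ * (q - s) - ε * (q - p)) / (Δ - ε) with hsE
  have e1 : (Δ - ε) * (q - sE) = Δ * (q - s) - ε * (q - p) := by rw [hsE]; field_simp; ring
  clear_value sE
  set sE' := p - Δ' * (p - s') / (Δ' + ε) with hsE'
  have e2 : (Δ' + ε) * (p - sE') = Δ' * (p - s') := by
    rw [hsE']
    have h : p - (p - Δ' * (p - s') / (Δ' + ε)) = Δ' * (p - s') / (Δ' + ε) := by ring
    rw [h, mul_comm, div_mul_cancel₀ _ (ne_of_lt hd')]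
  clear_value sE'
  have move0 : (Δ - ε) * (sE - s) = ε * (s - p) := by linear_combination -e1
  have move1 : (-Δ' - ε) * (s' - sE') = ε * (p - s') := by linear_combination -e2
  have hd'' : 0 < -Δ' - ε := by linarith
  have hssE : s ≤ sE := by
    have := le_of_factor hd move0 (by nlinarith : (0:ℝ) ≤ ε * (s - p))
    linarith
  have hsEq : sE < q := by
    have hv : 0 < Δ * (q - s) - ε * (q - p) := by nlinarith [hε3]
    have := lt_of_factor hd e1 hv
    linarith
  have hsE's' : sE' ≤ s' := by
    have := le_of_factor hd'' move1 (by nlinarith : (0:ℝ) ≤ ε * (p - s'))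
    linarith
  have hsE'o : o < sE' := by
    have eq : (-Δ' - ε) * (sE' - o) = (-Δ' - ε) * (p - o) - (-Δ') * (p - s') := by
      linear_combination e2
    have hv : 0 < (-Δ' - ε) * (p - o) - (-Δ') * (p - s') := by nlinarith [hε4]
    have := lt_of_factor hd'' eq hv
    linarith
  have hsE'p : sE' ≤ p := by
    have eq : (-Δ' - ε) * (p - sE') = (-Δ') * (p - s') := by linear_combination -e2
    have := le_of_factor hd'' eq (by nlinarith : (0:ℝ) ≤ (-Δ') * (p - s'))
    linarith
  have hval : ∀ i' : Fin n,
      (Δ - ε) * max (x ↑i' - sE) 0 + (Δ' + ε) * max (x ↑i' - sE') 0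
        = D j0 * max (x ↑i' - S j0) 0 + D j1 * max (x ↑i' - S j1) 0 := by
    intro i'
    rw [← hΔ0, ← hΔ1, ← hsdef, ← hs'def]
    have hcase : (↑i' : ℕ) ≤ k - 1 ∨ (↑i' : ℕ) = k ∨ k + 1 ≤ (↑i' : ℕ) := by omega
    rcases hcase with h | h | h
    · have ht : x ↑i' ≤ o := xle hsorted h (by omega)
      rw [relu_of_le (by linarith), relu_of_le (by linarith),
        relu_of_le (by linarith), relu_of_le (by linarith)]
      ring
    · have ht : x ↑i' = p := by rw [hp, h]
      rw [ht]
      rw [relu_of_le (by linarith), relu_of_ge (by linarith),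
        relu_of_le (by linarith), relu_of_ge (by linarith)]
      linear_combination e2
    · have ht : q ≤ x ↑i' := xle hsorted h i'.isLt
      rw [relu_of_ge (by linarith), relu_of_ge (by linarith),
        relu_of_ge (by linarith), relu_of_ge (by linarith)]
      linear_combination e1 + e2
  have key := double_surgery hint hmin j0 j1 hne (Δ - ε) sE (Δ' + ε) sE' hval
  have hm0 : (Δ - ε) * |sE - s| ≤ ε * (s - p) := by
    rw [abs_of_nonneg (by linarith : (0:ℝ) ≤ sE - s)]
    nlinarith [move0]
  have hm1 : (-Δ' - ε) * |sE' - s'| ≤ ε * (p - s') := by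
    rw [abs_of_nonpos (by linarith : sE' - s' ≤ 0)]
    nlinarith [move1]
  have drop := cost_drop (Δ := Δ) (Δ' := Δ') (s := s) (s' := s') (sE := sE) (sE' := sE')
    (a0 := s - p) (a1 := p - s') hεpos (by linarith) (by linarith) hm0 hm1 ?_
  · rw [← hΔ0, ← hΔ1, ← hsdef, ← hs'def] at key
    linarith
  · have h1 := abs_lt_om s
    have h2 := abs_lt_om s'
    have h3 : s ≤ |s| := le_abs_self s
    have h4 : -s' ≤ |s'| := neg_le_abs s'
    linarith


omit hn hx0 hsorted hint hmin in
lemma affine_through {c d p q yp yq t : ℝ} (hne : q - p ≠ 0)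
    (hp : c * p + d = yp) (hq : c * q + d = yq) :
    yp + (yq - yp) / (q - p) * (t - p) = c * t + d := by
  rw [← hp, ← hq]
  field_simp
  ring

/-- the interior-interval structure theorem, convex case -/
lemma core_convex (k : ℕ) (hk1 : 1 ≤ k) (hk : k + 3 ≤ n)
    (j0 : Fin m) (hj0 : 0 < D j0) (hj0a : x k < S j0) (hj0b : S j0 < x (k + 1)) :
    ∀ t ∈ Set.Ico (x k) (x (k + 1)),
      (gPiece x y (k + 1) t ≤ kfun m D S A B t ∧
        gPiece x y (k - 1) t ≤ kfun m D S A B t) ∧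
      kfun m D S A B t ≤ gPiece x y k t := by
  have hidx : k - 1 + 1 = k := by omega
  set F := kfun m D S A B with hF
  set o := x (k - 1) with ho
  set p := x k with hp
  set q := x (k + 1) with hq
  set r := x (k + 2) with hr
  have hop : o < p := hsorted (k - 1) k (by omega) (by omega)
  have hpq : p < q := hsorted k (k + 1) (by omega) (by omega)
  have hqr : q < r := hsorted (k + 1) (k + 2) (by omega) (by omega)
  have Fo : F o = y (k - 1) := by
    have := hint ⟨k - 1, by omega⟩; simpa [hF, ho] using this
  have Fp : F p = y k := by
    have := hint ⟨k, by omega⟩; simpa [hF, hp] using this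
  have Fq : F q = y (k + 1) := by
    have := hint ⟨k + 1, by omega⟩; simpa [hF, hq] using this
  have Fr : F r = y (k + 2) := by
    have := hint ⟨k + 2, by omega⟩; simpa [hF, hr] using this
  -- all kinks strictly inside (p, q) are convex
  have Y1 : ∀ j, p < S j → S j < q → 0 ≤ D j := by
    intro j hj1 hj2
    by_contra hneg
    push_neg at hneg
    have hne : j0 ≠ j := by intro he; rw [he] at hj0; linarith
    exact surgeryF1 hn hsorted hint hmin k (by omega) j0 j hne hj0 hj0a hj0b hneg hj1 hj2
  -- upper bound by the chord g_k
  have Cle : ∀ t ∈ Set.Icc p q, F t ≤ gPiece x y k t := by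
    intro t ⟨htp, htq⟩
    have hcond : ∀ j, 0 ≤ D j ∨ S j ≤ p ∨ q ≤ S j := by
      intro j
      rcases le_or_gt (S j) p with h | h
      · exact Or.inr (Or.inl h)
      rcases le_or_gt q (S j) with h' | h'
      · exact Or.inr (Or.inr h')
      · exact Or.inl (Y1 j h h')
    have hchord := kfun_chord m D S A B p q t htp htq hcond
    rw [← hF, Fp, Fq] at hchord
    have hg : gPiece x y k t * (q - p) = y k * (q - t) + y (k + 1) * (t - p) := by
      have hne2 : q - p ≠ 0 := ne_of_gt (by linarith)
      unfold gPiece affThrough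
      rw [← hp, ← hq]
      field_simp [hne2]
      ring
    have h2 : F t * (q - p) ≤ gPiece x y k t * (q - p) := by rw [hg]; linarith
    exact le_of_mul_le_mul_right (by linarith [h2]) (by linarith : (0:ℝ) < q - p)
  -- lower bound by g_{k+1}
  have C1 : ∀ t ∈ Set.Ico p q, gPiece x y (k + 1) t ≤ F t := by
    intro t ⟨htp, htq⟩
    by_contra hviol
    push_neg at hviol
    -- there must be a concave kink in [q, r)
    have hex : ∃ j1, D j1 < 0 ∧ q ≤ S j1 ∧ S j1 < r := by
      by_contra hno
      have hcond : ∀ j, 0 ≤ D j ∨ S j ≤ t ∨ r ≤ S j := by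
        intro j
        rcases le_or_gt (S j) t with h | h
        · exact Or.inr (Or.inl h)
        rcases le_or_gt r (S j) with h' | h'
        · exact Or.inr (Or.inr h')
        rcases le_or_gt q (S j) with h'' | h''
        · left
          by_contra hneg
          push_neg at hneg
          exact hno ⟨j, hneg, h'', h'⟩
        · exact Or.inl (Y1 j (by linarith) h'')
      have hslope := kfun_slope m D S A B t q r htq hqr hcond
      rw [← hF, Fq, Fr] at hslope
      have hg : gPiece x y (k + 1) t * (r - q) = y (k + 1) * (r - t) + y (k + 2) * (t - q) := by
        have hne3 : r - q ≠ 0 := ne_of_gt (by linarith)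
        unfold gPiece affThrough
        rw [← hq, ← hr]
        field_simp [hne3]
        ring
      nlinarith [hviol, hslope]
    obtain ⟨j1, hj1, hj1a, hj1b⟩ := hex
    have hne : j0 ≠ j1 := by intro he; rw [he] at hj0; linarith
    exact surgeryB hn hsorted hint hmin k (by omega) j0 j1 hne hj0 hj0a hj0b hj1 hj1a hj1b
  -- lower bound by g_{k-1}
  have C2 : ∀ t ∈ Set.Ico p q, gPiece x y (k - 1) t ≤ F t := by
    intro t ⟨htp, htq⟩
    by_contra hviol
    push_neg at hviol
    have hg : gPiece x y (k - 1) t * (p - o) = y (k - 1) * (p - t) + y k * (t - o) := by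
      have hne4 : p - o ≠ 0 := ne_of_gt (by linarith)
      unfold gPiece affThrough
      rw [hidx, ← ho, ← hp]
      field_simp [hne4]
      ring
    have htp' : p < t := by
      rcases eq_or_lt_of_le htp with h | h
      · exfalso
        have : gPiece x y (k - 1) p = y k := by
          have hne4 : p - o ≠ 0 := ne_of_gt (by linarith)
          unfold gPiece affThrough
          rw [hidx, ← ho, ← hp]
          field_simp [hne4]
          ring
        rw [← h] at hviol
        rw [this] at hviol
        linarith [le_of_eq Fp, ge_of_eq Fp]
      · exact h
    have hex : ∃ j1, D j1 < 0 ∧ o < S j1 ∧ S j1 ≤ p := by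
      by_contra hno
      have hcond : ∀ j, 0 ≤ D j ∨ S j ≤ o ∨ t ≤ S j := by
        intro j
        rcases le_or_gt (S j) o with h | h
        · exact Or.inr (Or.inl h)
        rcases le_or_gt t (S j) with h' | h'
        · exact Or.inr (Or.inr h')
        rcases le_or_gt (S j) p with h'' | h''
        · left
          by_contra hneg
          push_neg at hneg
          exact hno ⟨j, hneg, h, h''⟩
        · exact Or.inl (Y1 j h'' (by linarith))
      have hslope := kfun_slope m D S A B o p t hop htp' hcond
      rw [← hF, Fo, Fp] at hslope
      nlinarith [hviol, hslope]
    obtain ⟨j1, hj1, hj1a, hj1b⟩ := hex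
    have hne : j0 ≠ j1 := by intro he; rw [he] at hj0; linarith
    exact surgeryA hn hsorted hint hmin k hk1 (by omega) j0 j1 hne hj0 hj0a hj0b hj1 hj1a hj1b
  intro t ht
  exact ⟨⟨C1 t ht, C2 t ht⟩, Cle t (Set.mem_Icc_of_Ico ht)⟩

include hx0 in
/-- the flat case: no kinks strictly inside the interval -/
lemma flat_piece (k : ℕ) (hk1 : 1 ≤ k) (hk : k + 2 ≤ n)
    (hflat : ∀ j, x k < S j → S j < x (k + 1) → D j = 0) :
    ∀ t ∈ Set.Icc (x k) (x (k + 1)), kfun m D S A B t = gPiece x y k t := by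
  classical
  set p := x k with hp
  set q := x (k + 1) with hq
  have hpq : p < q := hsorted k (k + 1) (by omega) (by omega)
  set c := A + ∑ j, (if S j ≤ p then D j else 0) with hc
  set d := B - ∑ j, (if S j ≤ p then D j * S j else 0) with hd
  have hlin : ∀ t ∈ Set.Icc p q, kfun m D S A B t = c * t + d := by
    intro t ⟨htp, htq⟩
    have hterm : ∀ j : Fin m, D j * max (t - S j) 0
        = (if S j ≤ p then D j else 0) * t - (if S j ≤ p then D j * S j else 0) := by
      intro j
      rcases le_or_gt (S j) p with h | h
      · rw [if_pos h, if_pos h, relu_of_ge (by linarith)]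
        ring
      · rw [if_neg (not_le.2 h), if_neg (not_le.2 h)]
        rcases le_or_gt q (S j) with h' | h'
        · rw [relu_of_le (by linarith)]
          ring
        · rw [hflat j h h']
          ring
    unfold kfun
    rw [Finset.sum_congr rfl (fun j _ => hterm j), Finset.sum_sub_distrib, ← Finset.sum_mul]
    rw [hc, hd]
    ring
  intro t ht
  have h1 : c * p + d = y k := by
    rw [← hlin p (Set.mem_Icc.2 ⟨le_refl _, le_of_lt hpq⟩)]
    have := hint ⟨k, by omega⟩; simpa [hp] using this
  have h2 : c * q + d = y (k + 1) := by
    rw [← hlin q (Set.mem_Icc.2 ⟨le_of_lt hpq, le_refl _⟩)]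
    have := hint ⟨k + 1, by omega⟩; simpa [hq] using this
  rw [hlin t ht]
  unfold gPiece affThrough
  rw [← hp, ← hq]
  exact (affine_through (ne_of_gt (by linarith : (0:ℝ) < q - p)) h1 h2).symm


omit hn hx0 hsorted hint hmin in
lemma kfun_neg (t : ℝ) :
    kfun m (fun j => -D j) S (-A) (-B) t = -kfun m D S A B t := by
  unfold kfun
  have h : ∑ j, (fun j => -D j) j * max (t - S j) 0 = -∑ j, D j * max (t - S j) 0 := by
    rw [← Finset.sum_neg_distrib]
    apply Finset.sum_congr rfl
    intro j _
    ring
  rw [h]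
  ring

omit hn hx0 hsorted hint hmin in
lemma gPiece_neg (k : ℕ) (t : ℝ) :
    gPiece x (fun i => -y i) k t = -gPiece x y k t := by
  unfold gPiece affThrough
  ring

end Surgery

end MinNormAux

open MinNormAux


/-- **Lemma (pointwise bound on the deviation of the min-norm interpolator).**
For every intermediate interval `[x_i, x_{i+1})` (1-indexed `i ∈ {2,…,n-2}`, i.e.
0-indexed `k ∈ {1,…,n-3}`),
`|f̂(t) − f*(t)| ≤ max (|g_i(t) − f*(t)|) (min (|g_{i+1}(t) − f*(t)|) (|g_{i-1}(t) − f*(t)|))`;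
moreover `|f̂(t) − f*(t)| = |g₁(t) − f*(t)|` on `[0, x₂)` and
`|f̂(t) − f*(t)| = |g_{n-1}(t) − f*(t)|` on `[x_{n-1}, 1]`. (Stated 0-indexed.) -/
theorem min_norm_deviation_bound (n : ℕ) (hn : 2 ≤ n) (x y : ℕ → ℝ)
    (hx0 : 0 ≤ x 0) (hsorted : ∀ i j, i < j → j < n → x i < x j)
    (f : ℝ → ℝ) (hf : IsMinNormNet (fun i : Fin n => (x i, y i)) f)
    (fstar : ℝ → ℝ) :
    (∀ k, 1 ≤ k → k + 3 ≤ n → ∀ t ∈ Set.Ico (x k) (x (k + 1)),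
      |f t - fstar t| ≤
        max (|gPiece x y k t - fstar t|)
          (min (|gPiece x y (k + 1) t - fstar t|) (|gPiece x y (k - 1) t - fstar t|))) ∧
    (∀ t ∈ Set.Ico (0 : ℝ) (x 1), |f t - fstar t| = |gPiece x y 0 t - fstar t|) ∧
    (∀ t ∈ Set.Icc (x (n - 2)) (1 : ℝ), |f t - fstar t| = |gPiece x y (n - 2) t - fstar t|) := by
  classical
  obtain ⟨m, D, S, A, B, hrep, hmin⟩ := exists_kink_min x y f hf
  obtain ⟨m₀, a₀, w₀, b₀, aa, bb, hfe, hintf, hmm⟩ := hf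
  have hint : ∀ i : Fin n, kfun m D S A B (x ↑i) = y ↑i := by
    intro i
    rw [← hrep]
    exact hintf i
  refine ⟨?_, ?_, ?_⟩
  · -- interior intervals
    intro k hk1 hk t ht
    obtain ⟨htp, htq⟩ := ht
    rw [hrep t]
    by_cases hflat : ∀ j, x k < S j → S j < x (k + 1) → D j = 0
    · rw [flat_piece hn hx0 hsorted hint hmin k hk1 (by omega) hflat t ⟨htp, le_of_lt htq⟩]
      exact le_max_left _ _
    · push_neg at hflat
      obtain ⟨j0, hj0a, hj0b, hj0ne⟩ := hflat
      have hbet : ((gPiece x y k t ≤ kfun m D S A B t ∧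
            kfun m D S A B t ≤ gPiece x y (k + 1) t) ∨
          (gPiece x y (k + 1) t ≤ kfun m D S A B t ∧
            kfun m D S A B t ≤ gPiece x y k t)) ∧
          ((gPiece x y k t ≤ kfun m D S A B t ∧
            kfun m D S A B t ≤ gPiece x y (k - 1) t) ∨
          (gPiece x y (k - 1) t ≤ kfun m D S A B t ∧
            kfun m D S A B t ≤ gPiece x y k t)) := by
        rcases hj0ne.lt_or_gt with hneg | hpos
        · -- concave case via negation
          have hintn : ∀ i : Fin n,
              kfun m (fun j => -D j) S (-A) (-B) (x ↑i) = (fun i => -y i) (↑i : ℕ) := by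
            intro i
            rw [kfun_neg, hint i]
          have hminn : ∀ m' (D' S' : Fin m' → ℝ) (A' B' : ℝ),
              (∀ i : Fin n, kfun m' D' S' A' B' (x ↑i) = (fun i => -y i) (↑i : ℕ)) →
              kcost m (fun j => -D j) S ≤ kcost m' D' S' := by
            intro m' D' S' A' B' hint'
            have h1 : kcost m (fun j => -D j) S = kcost m D S := by
              unfold kcost; apply Finset.sum_congr rfl; intro j _; rw [abs_neg]
            have h2 : kcost m' D' S' = kcost m' (fun j => -D' j) S' := by
              unfold kcost; apply Finset.sum_congr rfl; intro j _; rw [abs_neg]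
            rw [h1, h2]
            apply hmin m' (fun j => -D' j) S' (-A') (-B')
            intro i
            rw [kfun_neg, hint' i]
            ring
          have hcore := core_convex (y := fun i => -y i) (D := fun j => -D j)
            (A := -A) (B := -B) hn hsorted hintn hminn k hk1 hk j0
            (show (0:ℝ) < -D j0 by linarith) hj0a hj0b t ⟨htp, htq⟩
          rw [kfun_neg (m := m) (D := D) (S := S) (A := A) (B := B),
            gPiece_neg (x := x) (y := y) (k + 1), gPiece_neg (x := x) (y := y) (k - 1),
            gPiece_neg (x := x) (y := y) k] at hcore
          obtain ⟨⟨hc1, hc2⟩, hc3⟩ := hcore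
          exact ⟨Or.inl ⟨by linarith, by linarith⟩, Or.inl ⟨by linarith, by linarith⟩⟩
        · have hcore := core_convex hn hsorted hint hmin k hk1 hk j0 hpos hj0a hj0b t ⟨htp, htq⟩
          obtain ⟨⟨hc1, hc2⟩, hc3⟩ := hcore
          exact ⟨Or.inr ⟨hc1, hc3⟩, Or.inr ⟨hc2, hc3⟩⟩
      rcases le_total |gPiece x y (k + 1) t - fstar t| |gPiece x y (k - 1) t - fstar t|
        with hm | hm
      · rw [min_eq_left hm]
        exact abs_le_max_of_between hbet.1
      · rw [min_eq_right hm]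
        exact abs_le_max_of_between hbet.2
  · -- left piece
    intro t ht
    rw [hrep t, left_piece hn hx0 hsorted hint hmin (le_of_lt ht.2)]
  · -- right piece
    intro t ht
    rw [hrep t, right_piece hn hx0 hsorted hint hmin ht.1]


end
end
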